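/- arXiv:1408.0317 — 8 statements merged into one kernel-verified Lean document; each statement's English description precedes it below -/
import Mathlib

section
/- Let f : ℝ → ℝ be continuous and t ∈ ℝ be such that L := liminf_{u→t} α̃_{f,u} < 1, where α̃_{f,u} is the local Hölder exponent of f at u. Then for every s' ∈ ℝ one has σ_{f,t}(s') ≤ L, where σ_{f,t}(s') := sup{σ ∈ (0,1) : ∃ C > 0, ρ > 0 such that |f(u) − f(v)| ≤ C|u − v|^σ (|u − t| + |v − t|)^{−s'} for all u, v ∈ B(t,ρ) with (u,v) ≠ (t,t)} (with sup ∅ := 0). In other words, the time-domain 2-microlocal frontier of f at t is bounded above by the liminf of the local Hölder exponents of f at nearby points. -/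
open Filter MeasureTheory Set Topology ENNReal

/-- The local Hölder exponent of `f` at `u`:
`sup {α > 0 : limsup_{ρ→0⁺} sup_{x,y ∈ B(u,ρ), x≠y} |f x − f y|/|x−y|^α < ∞}`,
with `sup ∅ = 0` (values in `ℝ≥0∞`). -/
noncomputable def localHolderExp (f : ℝ → ℝ) (u : ℝ) : ℝ≥0∞ :=
  ⨆ (α : ℝ) (_ : 0 < α ∧
      Filter.limsup (fun ρ : ℝ =>
          ⨆ (x : ℝ) (_ : x ∈ Metric.ball u ρ) (y : ℝ) (_ : y ∈ Metric.ball u ρ) (_ : x ≠ y),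
            ENNReal.ofReal (|f x - f y| / |x - y| ^ α)) (𝓝[>] (0 : ℝ)) < ⊤),
    ENNReal.ofReal α

/-- The time-domain 2-microlocal frontier of `f` at `t`, evaluated at `s'`:
`sup {σ ∈ (0,1) : ∃ C > 0, ρ > 0, ∀ u v ∈ B(t,ρ), (u,v) ≠ (t,t),
  |f u − f v| ≤ C |u−v|^σ (|u−t|+|v−t|)^{−s'}}`, with `sup ∅ = 0` (values in `ℝ≥0∞`). -/
noncomputable def microlocalFrontier (f : ℝ → ℝ) (t s' : ℝ) : ℝ≥0∞ :=
  ⨆ (σ : ℝ) (_ : 0 < σ ∧ σ < 1 ∧ ∃ C > (0 : ℝ), ∃ ρ > (0 : ℝ),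
      ∀ u ∈ Metric.ball t ρ, ∀ v ∈ Metric.ball t ρ, (u, v) ≠ (t, t) →
        |f u - f v| ≤ C * |u - v| ^ σ * (|u - t| + |v - t|) ^ (-s')),
    ENNReal.ofReal σ

/-- If the liminf of local Hölder exponents of `f` at points near `t` is `< 1`, then the
2-microlocal frontier of `f` at `t` is bounded above by this liminf, for every `s'`. -/
theorem stmt_0 (f : ℝ → ℝ) (hf : Continuous f) (t : ℝ)
    (hL : Filter.liminf (fun u => localHolderExp f u) (𝓝[≠] t) < 1) :
    ∀ s' : ℝ, microlocalFrontier f t s' ≤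
      Filter.liminf (fun u => localHolderExp f u) (𝓝[≠] t) := by
  intro s'
  refine iSup_le fun σ => iSup_le fun hσ => ?_
  obtain ⟨hσ0, hσ1, C, hC, ρ, hρ, H⟩ := hσ
  refine Filter.le_liminf_of_le (by isBoundedDefault) ?_
  have h1 : ∀ᶠ u in 𝓝[≠] t, u ∈ Metric.ball t ρ :=
    eventually_mem_set.mpr (nhdsWithin_le_nhds (Metric.ball_mem_nhds t hρ))
  filter_upwards [h1, self_mem_nhdsWithin] with u hu hut
  have hut' : u ≠ t := hut
  set r : ℝ := |u - t| with hrdef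
  have hr : 0 < r := abs_pos.mpr (sub_ne_zero.mpr hut')
  have hrρ : r < ρ := by
    have := Metric.mem_ball.mp hu
    rwa [Real.dist_eq] at this
  set ρ' : ℝ := min (r / 2) (ρ - r) with hρ'def
  have hρ' : 0 < ρ' := lt_min (by linarith) (by linarith)
  set M : ℝ := max ((2 * ρ) ^ (-s')) (r ^ (-s')) with hMdef
  have hP : 0 < σ ∧
      Filter.limsup (fun ρ'' : ℝ =>
          ⨆ (x : ℝ) (_ : x ∈ Metric.ball u ρ'') (y : ℝ) (_ : y ∈ Metric.ball u ρ'') (_ : x ≠ y),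
            ENNReal.ofReal (|f x - f y| / |x - y| ^ σ)) (𝓝[>] (0 : ℝ)) < ⊤ := by
    refine ⟨hσ0, ?_⟩
    have hev : ∀ᶠ ρ'' in 𝓝[>] (0 : ℝ),
        (⨆ (x : ℝ) (_ : x ∈ Metric.ball u ρ'') (y : ℝ) (_ : y ∈ Metric.ball u ρ'') (_ : x ≠ y),
          ENNReal.ofReal (|f x - f y| / |x - y| ^ σ)) ≤ ENNReal.ofReal (C * M) := by
      have : ∀ᶠ ρ'' in 𝓝[>] (0 : ℝ), ρ'' < ρ' :=
        (eventually_lt_nhds hρ').filter_mono nhdsWithin_le_nhds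
      filter_upwards [this] with ρ'' hρ''
      refine iSup_le fun x => iSup_le fun hx => iSup_le fun y => iSup_le fun hy =>
        iSup_le fun hxy => ?_
      have hxu : |x - u| < ρ' := by
        have := Metric.mem_ball.mp hx; rw [Real.dist_eq] at this; linarith
      have hyu : |y - u| < ρ' := by
        have := Metric.mem_ball.mp hy; rw [Real.dist_eq] at this; linarith
      have hρ'1 : ρ' ≤ r / 2 := min_le_left _ _
      have hρ'2 : ρ' ≤ ρ - r := min_le_right _ _
      have tx1 : |x - t| ≤ |x - u| + |u - t| := abs_sub_le x u t
      have tx2 : |u - t| ≤ |u - x| + |x - t| := abs_sub_le u x t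
      have ty1 : |y - t| ≤ |y - u| + |u - t| := abs_sub_le y u t
      have ty2 : |u - t| ≤ |u - y| + |y - t| := abs_sub_le u y t
      have hux : |u - x| = |x - u| := abs_sub_comm u x
      have huy : |u - y| = |y - u| := abs_sub_comm u y
      have hxt_lt : |x - t| < ρ := by linarith
      have hyt_lt : |y - t| < ρ := by linarith
      have hxt_ge : r / 2 ≤ |x - t| := by rw [hux] at tx2; linarith
      have hyt_ge : r / 2 ≤ |y - t| := by rw [huy] at ty2; linarith
      have hxt_ne : x ≠ t := by
        intro h; rw [h] at hxt_ge; simp at hxt_ge; linarith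
      have hs1 : r ≤ |x - t| + |y - t| := by linarith
      have hs2 : |x - t| + |y - t| ≤ 2 * ρ := by linarith
      have hsM : (|x - t| + |y - t|) ^ (-s') ≤ M := by
        rcases le_or_gt 0 (-s') with h | h
        · exact le_trans (Real.rpow_le_rpow (by positivity) hs2 h) (le_max_left _ _)
        · exact le_trans (Real.rpow_le_rpow_of_nonpos hr hs1 h.le) (le_max_right _ _)
      have hne : (x, y) ≠ (t, t) := by
        simp only [ne_eq, Prod.mk.injEq, not_and]
        intro h; exact absurd h hxt_ne
      have hx' : x ∈ Metric.ball t ρ := by rw [Metric.mem_ball, Real.dist_eq]; exact hxt_lt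
      have hy' : y ∈ Metric.ball t ρ := by rw [Metric.mem_ball, Real.dist_eq]; exact hyt_lt
      have hH := H x hx' y hy' hne
      have hpow : (0 : ℝ) < |x - y| ^ σ :=
        Real.rpow_pos_of_pos (abs_pos.mpr (sub_ne_zero.mpr hxy)) σ
      refine ENNReal.ofReal_le_ofReal ?_
      rw [div_le_iff₀ hpow]
      calc |f x - f y| ≤ C * |x - y| ^ σ * (|x - t| + |y - t|) ^ (-s') := hH
        _ ≤ C * |x - y| ^ σ * M := by
            refine mul_le_mul_of_nonneg_left hsM (by positivity)
        _ = C * M * |x - y| ^ σ := by ring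
    exact lt_of_le_of_lt (Filter.limsup_le_of_le (by isBoundedDefault) hev)
      ENNReal.ofReal_lt_top
  exact le_iSup₂ (f := fun (α : ℝ) (_ : 0 < α ∧
      Filter.limsup (fun ρ'' : ℝ =>
          ⨆ (x : ℝ) (_ : x ∈ Metric.ball u ρ'') (y : ℝ) (_ : y ∈ Metric.ball u ρ'') (_ : x ≠ y),
            ENNReal.ofReal (|f x - f y| / |x - y| ^ α)) (𝓝[>] (0 : ℝ)) < ⊤) =>
    ENNReal.ofReal α) σ hP
end

section
/- Let f : ℝ → ℝ be continuous, t ∈ ℝ, σ ∈ (0,1), and suppose there exist C > 0 and ρ > 0 such that |f(u) − f(v)| ≤ C|u − v|^σ (|u − t| + |v − t|)^{−1} for all u, v ∈ B(t,ρ) with (u,v) ≠ (t,t). Then the local upper box dimension of the graph of f at t satisfies lim_{r→0⁺} limsup_{δ→0⁺} log N_δ(Gr(f, [t−r, t+r]))/(−log δ) ≤ 2 − σ; in particular the corresponding local lower box dimension is also at most 2 − σ. -/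
open Filter MeasureTheory Set Topology

/-- The graph of `f : ℝ → ℝ` over `V ⊆ ℝ`, as a subset of the Euclidean plane. -/
def graphE (f : ℝ → ℝ) (V : Set ℝ) : Set (EuclideanSpace ℝ (Fin 2)) :=
  {p | ∃ u ∈ V, p = ![u, f u]}

/-- `coverNum S δ` is the smallest number of sets of (Euclidean) diameter at most `δ`
needed to cover `S` (with the junk value `0` if no finite cover exists). -/
noncomputable def coverNum (S : Set (EuclideanSpace ℝ (Fin 2))) (δ : ℝ) : ℕ :=
  sInf {n : ℕ | ∃ U : Fin n → Set (EuclideanSpace ℝ (Fin 2)),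
    S ⊆ ⋃ i, U i ∧ ∀ i, Metric.diam (U i) ≤ δ}

/-- The local upper box dimension of the graph of `f` at `t`:
`lim_{r→0⁺} limsup_{δ→0⁺} log N_δ(Gr(f,[t−r,t+r]))/(−log δ)`; since the inner quantity is
nondecreasing in `r`, the limit is the infimum over `r > 0` (computed in `EReal`). -/
noncomputable def upperBoxLoc (f : ℝ → ℝ) (t : ℝ) : EReal :=
  ⨅ (r : ℝ) (_ : 0 < r),
    Filter.limsup (fun δ : ℝ =>
      ((Real.log (coverNum (graphE f (Icc (t - r) (t + r))) δ) / (-Real.log δ) : ℝ) : EReal))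
      (𝓝[>] (0 : ℝ))

/-- The local lower box dimension of the graph of `f` at `t`. -/
noncomputable def lowerBoxLoc (f : ℝ → ℝ) (t : ℝ) : EReal :=
  ⨅ (r : ℝ) (_ : 0 < r),
    Filter.liminf (fun δ : ℝ =>
      ((Real.log (coverNum (graphE f (Icc (t - r) (t + r))) δ) / (-Real.log δ) : ℝ) : EReal))
      (𝓝[>] (0 : ℝ))

/-! Cut the graph over `[t - r, t + r]` into columns of width `h = δ / 2`. On a column at
distance `k h` from `t` with `k ≥ 1` the hypothesis bounds the oscillation of `f` by
`C h^σ / (2 k h)`; on the two central columns continuity bounds it by a constant, which is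
`O(h^(σ-1))` since `σ ≤ 1`. So column `k` needs `O(h^(σ-2) / (k + 1))` squares of side `h`, and
summing the harmonic series gives `N_δ = O(δ^(σ-2) log (1/δ))`; the logarithmic factor does not
change the exponent. -/

section Covering

variable {X : Type*} [PseudoMetricSpace X]

def CoverableBy (S : Set X) (δ : ℝ) (n : ℕ) : Prop :=
  ∃ U : Finset (Set X), U.card ≤ n ∧ S ⊆ ⋃₀ ↑U ∧ ∀ s ∈ U, Metric.diam s ≤ δ

theorem CoverableBy.mono {S T : Set X} {δ : ℝ} {m n : ℕ} (hT : CoverableBy T δ m)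
    (hST : S ⊆ T) (hmn : m ≤ n) : CoverableBy S δ n := by
  obtain ⟨U, hU, hTU, hUδ⟩ := hT
  exact ⟨U, hU.trans hmn, hST.trans hTU, hUδ⟩

theorem CoverableBy.union {S T : Set X} {δ : ℝ} {m n : ℕ} (hS : CoverableBy S δ m)
    (hT : CoverableBy T δ n) : CoverableBy (S ∪ T) δ (m + n) := by
  classical
  obtain ⟨U, hU, hSU, hUδ⟩ := hS
  obtain ⟨V, hV, hTV, hVδ⟩ := hT
  refine ⟨U ∪ V, (Finset.card_union_le U V).trans (add_le_add hU hV), ?_, ?_⟩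
  · rw [Finset.coe_union, sUnion_union]
    exact union_subset_union hSU hTV
  · intro s hs
    rcases Finset.mem_union.1 hs with hs | hs
    exacts [hUδ s hs, hVδ s hs]

theorem coverableBy_biUnion {ι : Type*} {s : Finset ι} {S : ι → Set X} {δ : ℝ} {n : ι → ℕ}
    (h : ∀ i ∈ s, CoverableBy (S i) δ (n i)) :
    CoverableBy (⋃ i ∈ s, S i) δ (∑ i ∈ s, n i) := by
  classical
  induction s using Finset.induction_on with
  | empty => exact ⟨∅, by simp, by simp, by simp⟩
  | insert i s hi ih =>
    rw [Finset.sum_insert hi, Finset.set_biUnion_insert]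
    exact (h i (Finset.mem_insert_self i s)).union
      (ih fun j hj => h j (Finset.mem_insert_of_mem hj))

end Covering

theorem coverNum_le_of_coverableBy {S : Set (EuclideanSpace ℝ (Fin 2))} {δ : ℝ} {n : ℕ}
    (h : CoverableBy S δ n) : coverNum S δ ≤ n := by
  obtain ⟨U, hU, hSU, hUδ⟩ := h
  refine (Nat.sInf_le ?_).trans hU
  refine ⟨fun i => (U.equivFin.symm i : Set _), fun x hx => ?_,
    fun i => hUδ _ (U.equivFin.symm i).2⟩
  obtain ⟨s, hs, hxs⟩ := mem_sUnion.1 (hSU hx)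
  exact mem_iUnion.2 ⟨U.equivFin ⟨s, hs⟩, by simpa using hxs⟩

theorem diam_square_le {a b h : ℝ} (hh : 0 ≤ h) :
    Metric.diam {p : EuclideanSpace ℝ (Fin 2) | p 0 ∈ Icc a (a + h) ∧ p 1 ∈ Icc b (b + h)} ≤
      2 * h := by
  refine Metric.diam_le_of_forall_dist_le (by positivity) ?_
  rintro p ⟨hp0, hp1⟩ q ⟨hq0, hq1⟩
  have h0 : dist (p 0) (q 0) ≤ h := by simpa using Real.dist_le_of_mem_Icc hp0 hq0
  have h1 : dist (p 1) (q 1) ≤ h := by simpa using Real.dist_le_of_mem_Icc hp1 hq1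
  calc dist p q = √(dist (p 0) (q 0) ^ 2 + dist (p 1) (q 1) ^ 2) := by
        rw [EuclideanSpace.dist_eq, Fin.sum_univ_two]
    _ ≤ √((2 * h) ^ 2) := by
        gcongr
        nlinarith [dist_nonneg (x := p 0) (y := q 0), dist_nonneg (x := p 1) (y := q 1)]
    _ = 2 * h := Real.sqrt_sq (by positivity)

theorem coverableBy_graphE_of_abs_sub_le (f : ℝ → ℝ) {W : Set ℝ} {a h M : ℝ} (hh : 0 < h)
    (hW : W ⊆ Icc a (a + h)) (hM : ∀ u ∈ W, ∀ v ∈ W, |f u - f v| ≤ M) :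
    CoverableBy (graphE f W) (2 * h) (⌊2 * M / h⌋₊ + 1) := by
  classical
  rcases W.eq_empty_or_nonempty with rfl | ⟨w, hw⟩
  · exact ⟨∅, by simp, by simp [graphE], by simp⟩
  set b := f w - M
  set square : ℕ → Set (EuclideanSpace ℝ (Fin 2)) :=
    fun j => {p | p 0 ∈ Icc a (a + h) ∧ p 1 ∈ Icc (b + j * h) (b + j * h + h)}
  refine ⟨(Finset.range (⌊2 * M / h⌋₊ + 1)).image square,
    Finset.card_image_le.trans (Finset.card_range _).le, ?_, ?_⟩
  · rintro p ⟨u, hu, hp⟩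
    have hfu := abs_le.1 (hM u hu w hw)
    have hy : 0 ≤ (f u - b) / h := div_nonneg (by linarith) hh.le
    have hj : ⌊(f u - b) / h⌋₊ < ⌊2 * M / h⌋₊ + 1 :=
      Nat.lt_succ_of_le (Nat.floor_le_floor (by gcongr; linarith))
    have hlo : ⌊(f u - b) / h⌋₊ * h ≤ f u - b := (le_div_iff₀ hh).1 (Nat.floor_le hy)
    have hhi : f u - b < ⌊(f u - b) / h⌋₊ * h + h := by
      have := Nat.lt_floor_add_one ((f u - b) / h)
      rw [div_lt_iff₀ hh] at this
      linarith
    have hp0 : p 0 = u := congrFun hp 0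
    have hp1 : p 1 = f u := congrFun hp 1
    refine mem_sUnion.2 ⟨square ⌊(f u - b) / h⌋₊,
      Finset.mem_coe.2 (Finset.mem_image_of_mem _ (Finset.mem_range.2 hj)), ?_, ?_⟩
    · rw [hp0]
      exact hW hu
    · rw [hp1]
      constructor <;> linarith
  · simp only [Finset.mem_image]
    rintro _ ⟨j, -, rfl⟩
    exact diam_square_le hh.le

theorem abs_sub_le_div_of_le_abs_sub {f : ℝ → ℝ} {t σ C ρ d u v : ℝ}
    (hb : ∀ u ∈ Metric.ball t ρ, ∀ v ∈ Metric.ball t ρ, (u, v) ≠ (t, t) →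
      |f u - f v| ≤ C * |u - v| ^ σ * (|u - t| + |v - t|) ^ (-(1 : ℝ)))
    (hC : 0 ≤ C) (hu : u ∈ Metric.ball t ρ) (hv : v ∈ Metric.ball t ρ) (hd : 0 < d)
    (hdu : d ≤ |u - t|) (hdv : d ≤ |v - t|) :
    |f u - f v| ≤ C * |u - v| ^ σ / (2 * d) := by
  have hut : u ≠ t := by
    rintro rfl
    rw [sub_self, abs_zero] at hdu
    linarith
  calc |f u - f v| ≤ C * |u - v| ^ σ * (|u - t| + |v - t|) ^ (-(1 : ℝ)) :=
        hb u hu v hv fun h => hut (congrArg Prod.fst h)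
    _ ≤ C * |u - v| ^ σ * (2 * d)⁻¹ := by
        rw [Real.rpow_neg_one]
        gcongr
        linarith
    _ = C * |u - v| ^ σ / (2 * d) := (div_eq_mul_inv _ _).symm

theorem abs_sub_le_div_succ_of_mul_le_abs_sub {f : ℝ → ℝ} {t σ C ρ r B h u v : ℝ}
    (hb : ∀ u ∈ Metric.ball t ρ, ∀ v ∈ Metric.ball t ρ, (u, v) ≠ (t, t) →
      |f u - f v| ≤ C * |u - v| ^ σ * (|u - t| + |v - t|) ^ (-(1 : ℝ)))
    (hC : 0 ≤ C) (hσ0 : 0 ≤ σ) (hσ1 : σ ≤ 1) (hrρ : r < ρ)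
    (hB : ∀ u ∈ Icc (t - r) (t + r), ∀ v ∈ Icc (t - r) (t + r), |f u - f v| ≤ B)
    (hh : 0 < h) (hh1 : h ≤ 1) (k : ℕ) (hu : u ∈ Icc (t - r) (t + r))
    (hv : v ∈ Icc (t - r) (t + r)) (huv : |u - v| ≤ h) (hku : k * h ≤ |u - t|)
    (hkv : k * h ≤ |v - t|) :
    |f u - f v| ≤ (B + C) * h ^ (σ - 1) / (k + 1) := by
  have hB0 : 0 ≤ B := (abs_nonneg _).trans (hB u hu u hu)
  have hpow : 1 ≤ h ^ (σ - 1) :=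
    Real.one_le_rpow_of_pos_of_le_one_of_nonpos hh hh1 (by linarith)
  rcases Nat.eq_zero_or_pos k with rfl | hk
  · calc |f u - f v| ≤ B := hB u hu v hv
      _ ≤ (B + C) * h ^ (σ - 1) := by nlinarith
      _ = (B + C) * h ^ (σ - 1) / ((0 : ℕ) + 1) := by simp
  have hball : Icc (t - r) (t + r) ⊆ Metric.ball t ρ := fun x hx => by
    rw [Metric.mem_ball, Real.dist_eq, abs_lt]
    constructor <;> linarith [hx.1, hx.2]
  calc |f u - f v| ≤ C * |u - v| ^ σ / (2 * (k * h)) :=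
        abs_sub_le_div_of_le_abs_sub hb hC (hball hu) (hball hv) (by positivity) hku hkv
    _ ≤ C * h ^ σ / (2 * (k * h)) := by gcongr
    _ = C * h ^ (σ - 1) / (2 * k) := by
        rw [Real.rpow_sub_one hh.ne']
        field_simp
    _ ≤ (B + C) * h ^ (σ - 1) / (k + 1) := by
        have hk1 : (1 : ℝ) ≤ k := by exact_mod_cast hk
        exact div_le_div₀ (by positivity) (by nlinarith) (by positivity) (by linarith)

theorem Icc_subset_biUnion_columns (t r : ℝ) {h : ℝ} (hh : 0 < h) :
    Icc (t - r) (t + r) ⊆ ⋃ k ∈ Finset.range (⌊r / h⌋₊ + 1),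
      (Icc (t + k * h) (t + k * h + h) ∪ Icc (t - k * h - h) (t - k * h)) := by
  intro u hu
  have hdist : |u - t| ≤ r := abs_le.2 ⟨by linarith [hu.1], by linarith [hu.2]⟩
  set k := ⌊|u - t| / h⌋₊
  have hk : k < ⌊r / h⌋₊ + 1 := Nat.lt_succ_of_le (Nat.floor_le_floor (by gcongr))
  have hlo : k * h ≤ |u - t| := (le_div_iff₀ hh).1 (Nat.floor_le (by positivity))
  have hhi : |u - t| < k * h + h := by
    have := Nat.lt_floor_add_one (|u - t| / h)
    rw [div_lt_iff₀ hh] at this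
    linarith
  refine mem_iUnion₂.2 ⟨k, Finset.mem_range.2 hk, ?_⟩
  rcases le_total t u with htu | hut
  · rw [abs_of_nonneg (sub_nonneg.2 htu)] at hlo hhi
    exact Or.inl ⟨by linarith, by linarith⟩
  · rw [abs_of_nonpos (sub_nonpos.2 hut)] at hlo hhi
    exact Or.inr ⟨by linarith, by linarith⟩

theorem coverableBy_graphE_Icc {f : ℝ → ℝ} {t σ C ρ r B h : ℝ}
    (hb : ∀ u ∈ Metric.ball t ρ, ∀ v ∈ Metric.ball t ρ, (u, v) ≠ (t, t) →
      |f u - f v| ≤ C * |u - v| ^ σ * (|u - t| + |v - t|) ^ (-(1 : ℝ)))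
    (hC : 0 ≤ C) (hσ0 : 0 ≤ σ) (hσ1 : σ ≤ 1) (hrρ : r < ρ)
    (hB : ∀ u ∈ Icc (t - r) (t + r), ∀ v ∈ Icc (t - r) (t + r), |f u - f v| ≤ B)
    (hh : 0 < h) (hh1 : h ≤ 1) :
    CoverableBy (graphE f (Icc (t - r) (t + r))) (2 * h)
      (∑ k ∈ Finset.range (⌊r / h⌋₊ + 1),
        2 * (⌊2 * ((B + C) * h ^ (σ - 1) / (k + 1)) / h⌋₊ + 1)) := by
  set V := Icc (t - r) (t + r)
  have hcolumn (k : ℕ) (a : ℝ) (hka : ∀ u ∈ Icc a (a + h), k * h ≤ |u - t|) :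
      CoverableBy (graphE f (V ∩ Icc a (a + h))) (2 * h)
        (⌊2 * ((B + C) * h ^ (σ - 1) / (k + 1)) / h⌋₊ + 1) :=
    coverableBy_graphE_of_abs_sub_le f hh inter_subset_right fun u hu v hv =>
      abs_sub_le_div_succ_of_mul_le_abs_sub hb hC hσ0 hσ1 hrρ hB hh hh1 k hu.1 hv.1
        (abs_le.2 ⟨by linarith [hu.2.1, hv.2.2], by linarith [hu.2.2, hv.2.1]⟩)
        (hka u hu.2) (hka v hv.2)
  have hcover := coverableBy_biUnion (s := Finset.range (⌊r / h⌋₊ + 1)) fun k _ =>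
    (hcolumn k (t + k * h) fun u hu => le_abs.2 (Or.inl (by linarith [hu.1]))).union
      (hcolumn k (t - k * h - h) fun u hu => le_abs.2 (Or.inr (by linarith [hu.2])))
  refine hcover.mono ?_ (by simp only [two_mul, le_refl])
  rintro p ⟨u, hu, hp⟩
  obtain ⟨k, hk, hcol⟩ := mem_iUnion₂.1 (Icc_subset_biUnion_columns t r hh hu)
  refine mem_iUnion₂.2 ⟨k, hk, ?_⟩
  rcases hcol with hcol | hcol
  · exact Or.inl ⟨u, ⟨hu, hcol⟩, hp⟩
  · exact Or.inr ⟨u, ⟨hu, by simpa [sub_add_cancel] using hcol⟩, hp⟩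

theorem sum_div_succ_add_one_le {x : ℝ} (hx : 0 ≤ x) (K : ℕ) :
    ∑ k ∈ Finset.range K, (x / (k + 1) + 1) ≤ x * (1 + Real.log K) + K := by
  have hharm : ∑ k ∈ Finset.range K, x / (k + 1) = x * harmonic K := by
    simp [harmonic, Finset.mul_sum, div_eq_mul_inv]
  rw [Finset.sum_add_distrib, hharm]
  simp only [Finset.sum_const, Finset.card_range, nsmul_eq_mul, mul_one]
  gcongr
  exact harmonic_le_one_add_log K

theorem coverNum_graphE_Icc_le {f : ℝ → ℝ} {t σ C ρ r B h : ℝ}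
    (hb : ∀ u ∈ Metric.ball t ρ, ∀ v ∈ Metric.ball t ρ, (u, v) ≠ (t, t) →
      |f u - f v| ≤ C * |u - v| ^ σ * (|u - t| + |v - t|) ^ (-(1 : ℝ)))
    (hC : 0 ≤ C) (hσ0 : 0 ≤ σ) (hσ1 : σ ≤ 1) (hr : 0 ≤ r) (hrρ : r < ρ)
    (hB : ∀ u ∈ Icc (t - r) (t + r), ∀ v ∈ Icc (t - r) (t + r), |f u - f v| ≤ B)
    (hh : 0 < h) (hh1 : h ≤ 1) :
    (coverNum (graphE f (Icc (t - r) (t + r))) (2 * h) : ℝ) ≤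
      2 * (2 * (B + C) * h ^ (σ - 2) * (1 + Real.log (⌊r / h⌋₊ + 1 : ℕ)) +
        (⌊r / h⌋₊ + 1 : ℕ)) := by
  have htr : t ∈ Icc (t - r) (t + r) := ⟨by linarith, by linarith⟩
  have hB0 : 0 ≤ B := (abs_nonneg _).trans (hB t htr t htr)
  set x := 2 * (B + C) * h ^ (σ - 2) with hx
  have hterm (k : ℕ) : 2 * ((B + C) * h ^ (σ - 1) / (k + 1)) / h = x / (k + 1) := by
    have hpow : h ^ (σ - 2) = h ^ (σ - 1) / h := by
      rw [show σ - 2 = σ - 1 - 1 by ring, Real.rpow_sub_one hh.ne']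
    rw [hx, hpow]
    ring
  calc (coverNum (graphE f (Icc (t - r) (t + r))) (2 * h) : ℝ)
      ≤ ((∑ k ∈ Finset.range (⌊r / h⌋₊ + 1),
          2 * (⌊2 * ((B + C) * h ^ (σ - 1) / (k + 1)) / h⌋₊ + 1) : ℕ) : ℝ) :=
        Nat.cast_le.2 (coverNum_le_of_coverableBy
          (coverableBy_graphE_Icc hb hC hσ0 hσ1 hrρ hB hh hh1))
    _ ≤ ∑ k ∈ Finset.range (⌊r / h⌋₊ + 1), 2 * (x / (k + 1) + 1) := by
        push_cast
        gcongr with k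
        rw [← hterm k]
        exact Nat.floor_le (by positivity)
    _ ≤ 2 * (x * (1 + Real.log (⌊r / h⌋₊ + 1 : ℕ)) + (⌊r / h⌋₊ + 1 : ℕ)) := by
        rw [← Finset.mul_sum]
        gcongr
        exact sum_div_succ_add_one_le (by positivity) _

theorem coverNum_graphE_Icc_isBigO {f : ℝ → ℝ} {t σ C ρ r B : ℝ}
    (hb : ∀ u ∈ Metric.ball t ρ, ∀ v ∈ Metric.ball t ρ, (u, v) ≠ (t, t) →
      |f u - f v| ≤ C * |u - v| ^ σ * (|u - t| + |v - t|) ^ (-(1 : ℝ)))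
    (hC : 0 ≤ C) (hσ0 : 0 ≤ σ) (hσ1 : σ ≤ 1) (hr : 0 ≤ r) (hrρ : r < ρ)
    (hB : ∀ u ∈ Icc (t - r) (t + r), ∀ v ∈ Icc (t - r) (t + r), |f u - f v| ≤ B) :
    (fun δ => (coverNum (graphE f (Icc (t - r) (t + r))) δ : ℝ)) =O[𝓝[>] 0]
      fun δ => δ ^ (-(2 - σ)) * (1 - Real.log δ) := by
  have htr : t ∈ Icc (t - r) (t + r) := ⟨by linarith, by linarith⟩
  have hB0 : 0 ≤ B := (abs_nonneg _).trans (hB t htr t htr)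
  set c := 2 * r + 1
  have hlogc : 0 ≤ Real.log c := Real.log_nonneg (by linarith)
  refine Asymptotics.IsBigO.of_bound (2 * (8 * (B + C) * (1 + Real.log c) + c)) ?_
  filter_upwards [Ioc_mem_nhdsGT one_pos] with δ ⟨hδ0, hδ1⟩
  simp only [neg_sub]
  have hL : 0 ≤ -Real.log δ := neg_nonneg.2 (Real.log_nonpos hδ0.le hδ1)
  have hP : 0 < δ ^ (σ - 2) := Real.rpow_pos_of_pos hδ0 _
  set K : ℕ := ⌊r / (δ / 2)⌋₊ + 1
  have hK : (K : ℝ) ≤ c / δ := by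
    have hfloor := Nat.floor_le (div_nonneg hr (by positivity) : 0 ≤ r / (δ / 2))
    rw [le_div_iff₀ hδ0]
    calc (K : ℝ) * δ ≤ (r / (δ / 2) + 1) * δ := by push_cast [K]; gcongr
      _ = 2 * r + δ := by field_simp
      _ ≤ c := by linarith
  have hlogK : Real.log K ≤ Real.log c - Real.log δ := by
    rw [← Real.log_div (by positivity) hδ0.ne']
    exact Real.log_le_log (by positivity) hK
  have hpow : (δ / 2) ^ (σ - 2) ≤ 4 * δ ^ (σ - 2) := by
    rw [Real.div_rpow hδ0.le zero_le_two, div_eq_mul_inv, ← Real.rpow_neg zero_le_two, mul_comm]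
    gcongr
    calc (2 : ℝ) ^ (-(σ - 2)) ≤ 2 ^ (2 : ℝ) :=
          Real.rpow_le_rpow_of_exponent_le one_le_two (by linarith)
      _ = 4 := by norm_num
  have hinv : c / δ ≤ c * δ ^ (σ - 2) := by
    rw [div_eq_mul_inv, ← Real.rpow_neg_one]
    exact mul_le_mul_of_nonneg_left (Real.rpow_le_rpow_of_exponent_ge hδ0 hδ1 (by linarith))
      (by positivity)
  have hcount := coverNum_graphE_Icc_le hb hC hσ0 hσ1 hr hrρ hB (h := δ / 2) (by positivity)
    (by linarith)
  rw [show 2 * (δ / 2) = δ by ring] at hcount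
  rw [Real.norm_of_nonneg (Nat.cast_nonneg _), Real.norm_of_nonneg (by nlinarith)]
  calc (coverNum (graphE f (Icc (t - r) (t + r))) δ : ℝ)
      ≤ 2 * (2 * (B + C) * (δ / 2) ^ (σ - 2) * (1 + Real.log K) + K) := hcount
    _ ≤ 2 * (2 * (B + C) * (4 * δ ^ (σ - 2)) * (1 + (Real.log c - Real.log δ)) +
          c * δ ^ (σ - 2)) := by
        gcongr
        exact hK.trans hinv
    _ ≤ 2 * (8 * (B + C) * (1 + Real.log c) + c) * (δ ^ (σ - 2) * (1 - Real.log δ)) := by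
        nlinarith [mul_nonneg (mul_nonneg (mul_nonneg (add_nonneg hB0 hC) hP.le) hlogc) hL,
          mul_nonneg (mul_nonneg (by linarith : (0 : ℝ) ≤ c) hP.le) hL]

theorem tendsto_add_log_one_add_div_atTop (a : ℝ) :
    Tendsto (fun y : ℝ => (a + Real.log (1 + y)) / y) atTop (𝓝 0) := by
  have hlog : Tendsto (fun y : ℝ => Real.log (1 + y) / y) atTop (𝓝 0) := by
    refine ((Real.tendsto_pow_log_div_mul_add_atTop 1 (-1) 1 one_ne_zero).comp
      (tendsto_atTop_add_const_left _ 1 tendsto_id)).congr fun y => ?_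
    simp
  simpa [add_div] using (tendsto_const_nhds.div_atTop tendsto_id).add hlog

theorem limsup_log_div_neg_log_le_of_isBigO {N : ℝ → ℝ} {s : ℝ} (hs : 0 ≤ s)
    (hN : N =O[𝓝[>] 0] fun δ => δ ^ (-s) * (1 - Real.log δ)) :
    limsup (fun δ => ((Real.log (N δ) / -Real.log δ : ℝ) : EReal)) (𝓝[>] 0) ≤ s := by
  obtain ⟨c, hc⟩ := hN.bound
  set A := max c 1
  set g : ℝ → ℝ := fun δ => s + (Real.log A + Real.log (1 - Real.log δ)) / -Real.log δ
  have hg : Tendsto g (𝓝[>] 0) (𝓝 s) := by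
    have hL := tendsto_neg_atBot_atTop.comp Real.tendsto_log_nhdsGT_zero
    simpa [g, sub_eq_add_neg] using
      ((tendsto_add_log_one_add_div_atTop (Real.log A)).comp hL).const_add s
  calc limsup (fun δ => ((Real.log (N δ) / -Real.log δ : ℝ) : EReal)) (𝓝[>] 0)
      ≤ limsup (fun δ => (g δ : EReal)) (𝓝[>] 0) := limsup_le_limsup ?_
    _ = s := ((continuous_coe_real_ereal.tendsto s).comp hg).limsup_eq
  filter_upwards [hc, Ioo_mem_nhdsGT one_pos] with δ hδ ⟨hδ0, hδ1⟩
  have hL : 0 < -Real.log δ := neg_pos.2 (Real.log_neg hδ0 hδ1)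
  have hlogA : 0 ≤ Real.log A := Real.log_nonneg (le_max_right _ _)
  have hlogL : 0 ≤ Real.log (1 - Real.log δ) := Real.log_nonneg (by linarith)
  have hlog : Real.log (N δ) ≤ Real.log A + s * -Real.log δ + Real.log (1 - Real.log δ) := by
    rcases eq_or_ne (N δ) 0 with h0 | h0
    · rw [h0, Real.log_zero]
      positivity
    have hA : 0 < A := one_pos.trans_le (le_max_right _ _)
    have hδs : 0 < δ ^ (-s) := Real.rpow_pos_of_pos hδ0 _
    have h1L : 0 < 1 - Real.log δ := by linarith
    have hpos := mul_pos hδs h1L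
    rw [Real.norm_eq_abs, Real.norm_of_nonneg hpos.le] at hδ
    rw [← Real.log_abs]
    calc Real.log |N δ| ≤ Real.log (A * (δ ^ (-s) * (1 - Real.log δ))) :=
          Real.log_le_log (abs_pos.2 h0)
            (hδ.trans (mul_le_mul_of_nonneg_right (le_max_left _ _) hpos.le))
      _ = Real.log A + s * -Real.log δ + Real.log (1 - Real.log δ) := by
          rw [Real.log_mul hA.ne' hpos.ne', Real.log_mul hδs.ne' h1L.ne', Real.log_rpow hδ0]
          ring
  rw [EReal.coe_le_coe_iff, div_le_iff₀ hL]
  simp only [g, add_mul, div_mul_cancel₀ _ hL.ne']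
  linarith

theorem lowerBoxLoc_le_upperBoxLoc (f : ℝ → ℝ) (t : ℝ) : lowerBoxLoc f t ≤ upperBoxLoc f t :=
  iInf₂_mono fun _ _ => liminf_le_limsup

/-- If `|f u − f v| ≤ C |u−v|^σ (|u−t|+|v−t|)^{−1}` near `t`, then the local upper (hence also
lower) box dimension of the graph of `f` at `t` is at most `2 − σ`. -/
theorem stmt_1 (f : ℝ → ℝ) (hf : Continuous f) (t σ : ℝ) (hσ0 : 0 < σ) (hσ1 : σ < 1)
    (hbound : ∃ C > (0 : ℝ), ∃ ρ > (0 : ℝ),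
      ∀ u ∈ Metric.ball t ρ, ∀ v ∈ Metric.ball t ρ, (u, v) ≠ (t, t) →
        |f u - f v| ≤ C * |u - v| ^ σ * (|u - t| + |v - t|) ^ (-(1 : ℝ))) :
    upperBoxLoc f t ≤ ((2 - σ : ℝ) : EReal) ∧ lowerBoxLoc f t ≤ ((2 - σ : ℝ) : EReal) := by
  obtain ⟨C, hC, ρ, hρ, hb⟩ := hbound
  have hB : ∀ u ∈ Icc (t - ρ / 2) (t + ρ / 2), ∀ v ∈ Icc (t - ρ / 2) (t + ρ / 2),
      |f u - f v| ≤ Metric.diam (f '' Icc (t - ρ / 2) (t + ρ / 2)) := fun u hu v hv =>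
    Metric.dist_le_diam_of_mem (isCompact_Icc.image hf).isBounded (mem_image_of_mem f hu)
      (mem_image_of_mem f hv)
  have hN := coverNum_graphE_Icc_isBigO hb hC.le hσ0.le hσ1.le (by positivity) (by linarith) hB
  have hup : upperBoxLoc f t ≤ ((2 - σ : ℝ) : EReal) :=
    (iInf₂_le (ρ / 2) (by positivity)).trans (limsup_log_div_neg_log_le_of_isBigO (by linarith) hN)
  exact ⟨hup, (lowerBoxLoc_le_upperBoxLoc f t).trans hup⟩
end

section
/- Let f : ℝ → ℝ be continuous, t ∈ ℝ, σ ∈ (0,1), and suppose there exist s' ≥ 0, C > 0 and ρ > 0 such that |f(u) − f(v)| ≤ C|u − v|^σ (|u − t| + |v − t|)^{−s'} for all u, v ∈ B(t,ρ) with (u,v) ≠ (t,t). Then the local Hausdorff dimension of the graph of f at t satisfies dim_{H,t} Gr(f) ≤ 2 − σ. -/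
open Filter MeasureTheory Set Topology
open scoped ENNReal NNReal

/-- The local Hausdorff dimension of the graph of `f` at `t`:
`lim_{ρ→0⁺} dimH Gr(f,(t−ρ,t+ρ))`; since the inner quantity is nondecreasing in `ρ`, the
limit is the infimum over `ρ > 0`. -/
noncomputable def hausLoc (f : ℝ → ℝ) (t : ℝ) : ℝ≥0∞ :=
  ⨅ (ρ : ℝ) (_ : 0 < ρ), dimH (graphE f (Ioo (t - ρ) (t + ρ)))

lemma graphE_eq_image (f : ℝ → ℝ) (V : Set ℝ) :
    graphE f V = (fun u => WithLp.toLp 2 ![u, f u]) '' V := by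
  ext p
  constructor
  · rintro ⟨u, hu, hp⟩
    exact ⟨u, hu, by simp only [← hp, WithLp.toLp_ofLp]⟩
  · rintro ⟨u, hu, rfl⟩
    exact ⟨u, hu, rfl⟩

lemma dist_toLp_le (u v x y : ℝ) :
    dist (WithLp.toLp 2 ![u, x] : EuclideanSpace ℝ (Fin 2)) (WithLp.toLp 2 ![v, y]) ≤
      |u - v| + |x - y| := by
  rw [EuclideanSpace.dist_eq, Real.sqrt_le_left (by positivity)]
  simp only [Fin.sum_univ_two, Real.dist_eq, sq_abs, Fin.isValue, Matrix.cons_val_zero,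
    Matrix.cons_val_one, Matrix.cons_val_fin_one]
  nlinarith [abs_nonneg (u - v), abs_nonneg (x - y), sq_abs (u - v), sq_abs (x - y)]

lemma ediam_graphE_le {f : ℝ → ℝ} {V : Set ℝ} {δ : ℝ}
    (hV : ∀ u ∈ V, ∀ v ∈ V, |u - v| ≤ δ ∧ |f u - f v| ≤ δ) :
    Metric.ediam (graphE f V) ≤ ENNReal.ofReal (2 * δ) := by
  rw [graphE_eq_image]
  refine Metric.ediam_le ?_
  rintro _ ⟨u, hu, rfl⟩ _ ⟨v, hv, rfl⟩
  rw [edist_dist]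
  refine ENNReal.ofReal_le_ofReal ((dist_toLp_le _ _ _ _).trans ?_)
  linarith [hV u hu v hv]

lemma abs_sub_le_of_mem_Icc_mul {x y j δ : ℝ} (hx : x ∈ Icc (j * δ) ((j + 1) * δ))
    (hy : y ∈ Icc (j * δ) ((j + 1) * δ)) : |x - y| ≤ δ := by
  have h := Real.dist_le_of_mem_Icc hx hy
  rw [Real.dist_eq] at h
  linarith

lemma exists_fin_mem_Icc_mul {x L δ : ℝ} (hδ : 0 < δ) (hx : 0 ≤ x) (hxL : x ≤ L) :
    ∃ j : Fin (⌈L / δ⌉₊ + 1), x ∈ Icc (j * δ) ((j + 1) * δ) := by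
  have hxδ : 0 ≤ x / δ := div_nonneg hx hδ.le
  have hj : ⌊x / δ⌋₊ < ⌈L / δ⌉₊ + 1 := Nat.lt_succ_of_le <| Nat.cast_le.1 <|
    (Nat.floor_le hxδ).trans ((div_le_div_of_nonneg_right hxL hδ.le).trans (Nat.le_ceil _))
  refine ⟨⟨_, hj⟩, (le_div_iff₀ hδ).1 (Nat.floor_le hxδ), ?_⟩
  exact ((div_le_iff₀ hδ).1 (Nat.lt_floor_add_one _).le)

lemma exists_mapsTo_Icc_of_holder {f : ℝ → ℝ} {V : Set ℝ} {K σ δ : ℝ} (hσ : 0 ≤ σ) (hK : 0 ≤ K)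
    (hH : ∀ u ∈ V, ∀ v ∈ V, |f u - f v| ≤ K * |u - v| ^ σ)
    (hV : ∀ u ∈ V, ∀ v ∈ V, |u - v| ≤ δ) :
    ∃ c, MapsTo f V (Icc c (c + 2 * (K * δ ^ σ))) := by
  rcases V.eq_empty_or_nonempty with rfl | ⟨u, hu⟩
  · exact ⟨0, mapsTo_empty _ _⟩
  refine ⟨f u - K * δ ^ σ, fun v hv => ?_⟩
  have h : |f v - f u| ≤ K * δ ^ σ := (hH v hv u hu).trans <|
    mul_le_mul_of_nonneg_left (Real.rpow_le_rpow (abs_nonneg _) (hV v hv u hu) hσ) hK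
  constructor <;> linarith [abs_le.1 h]

lemma graphE_subset_iUnion_of_holder {f : ℝ → ℝ} {s : Set ℝ} {a b K σ δ : ℝ} (hσ : 0 ≤ σ)
    (hK : 0 ≤ K) (hδ : 0 < δ) (hs : s ⊆ Icc a b)
    (hH : ∀ u ∈ s, ∀ v ∈ s, |f u - f v| ≤ K * |u - v| ^ σ) :
    ∃ T : Fin (⌈(b - a) / δ⌉₊ + 1) × Fin (⌈2 * (K * δ ^ σ) / δ⌉₊ + 1) →
        Set (EuclideanSpace ℝ (Fin 2)),
      (∀ i, Metric.ediam (T i) ≤ ENNReal.ofReal (2 * δ)) ∧ graphE f s ⊆ ⋃ i, T i := by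
  let column : ℕ → Set ℝ := fun j => {v ∈ s | v - a ∈ Icc (j * δ) ((j + 1) * δ)}
  have hcolumn : ∀ j, ∀ u ∈ column j, ∀ v ∈ column j, |u - v| ≤ δ := fun j u hu v hv => by
    simpa using abs_sub_le_of_mem_Icc_mul hu.2 hv.2
  choose c hc using fun j => exists_mapsTo_Icc_of_holder hσ hK
    (fun u hu v hv => hH u hu.1 v hv.1) (hcolumn j)
  refine ⟨fun jk => graphE f {v ∈ column jk.1 | f v - c jk.1 ∈ Icc (jk.2 * δ) ((jk.2 + 1) * δ)},
    fun jk => ediam_graphE_le fun u hu v hv => ⟨hcolumn _ u hu.1 v hv.1, ?_⟩, ?_⟩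
  · simpa using abs_sub_le_of_mem_Icc_mul hu.2 hv.2
  · rintro p ⟨v, hv, hp⟩
    obtain ⟨j, hj⟩ := exists_fin_mem_Icc_mul hδ (sub_nonneg.2 (hs hv).1)
      (sub_le_sub_right (hs hv).2 a)
    have hcj := hc j ⟨hv, hj⟩
    obtain ⟨k, hk⟩ := exists_fin_mem_Icc_mul hδ (sub_nonneg.2 hcj.1)
      (by linarith [hcj.2] : f v - c j ≤ 2 * (K * δ ^ σ))
    exact mem_iUnion.2 ⟨(j, k), v, ⟨⟨hv, hj⟩, hk⟩, hp⟩

lemma card_grid_le {L K σ δ : ℝ} (hL : 0 ≤ L) (hK : 0 ≤ K) (hσ : σ ≤ 1) (hδ0 : 0 < δ)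
    (hδ1 : δ ≤ 1) :
    ((⌈L / δ⌉₊ + 1 : ℕ) : ℝ) * ((⌈2 * (K * δ ^ σ) / δ⌉₊ + 1 : ℕ) : ℝ) ≤
      (L + 2) * (2 * K + 2) * (δ ^ σ / δ ^ 2) := by
  have hceil : ∀ x : ℝ, 0 ≤ x → ((⌈x⌉₊ + 1 : ℕ) : ℝ) ≤ x + 2 := fun x hx => by
    push_cast; linarith [Nat.ceil_lt_add_one hx]
  have hδσ : δ ≤ δ ^ σ := by
    simpa using Real.rpow_le_rpow_of_exponent_ge hδ0 hδ1 hσ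
  have hcols : L / δ + 2 ≤ (L + 2) / δ := by
    rw [add_div]; gcongr; rw [le_div_iff₀ hδ0]; linarith
  have hrows : 2 * (K * δ ^ σ) / δ + 2 ≤ (2 * K + 2) * δ ^ σ / δ := by
    rw [le_div_iff₀ hδ0, add_mul, div_mul_cancel₀ _ hδ0.ne']; nlinarith
  calc _ ≤ (L / δ + 2) * (2 * (K * δ ^ σ) / δ + 2) := by
        gcongr
        · exact hceil _ (by positivity)
        · exact hceil _ (by positivity)
    _ ≤ (L + 2) / δ * ((2 * K + 2) * δ ^ σ / δ) := by gcongr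
    _ = _ := by field_simp

lemma card_grid_mul_rpow_le {L K σ δ : ℝ} (hL : 0 ≤ L) (hK : 0 ≤ K) (hσ : σ ≤ 1) (hδ0 : 0 < δ)
    (hδ1 : δ ≤ 1) (d : ℝ) :
    ((⌈L / δ⌉₊ + 1 : ℕ) : ℝ) * ((⌈2 * (K * δ ^ σ) / δ⌉₊ + 1 : ℕ) : ℝ) * (2 * δ) ^ d ≤
      (L + 2) * (2 * K + 2) * 2 ^ d * δ ^ (σ + d - 2) := by
  have hscale : δ ^ σ / δ ^ 2 * (2 * δ) ^ d = 2 ^ d * δ ^ (σ + d - 2) := by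
    rw [Real.mul_rpow zero_le_two hδ0.le, Real.rpow_sub hδ0, Real.rpow_add hδ0,
      ← Real.rpow_natCast]
    push_cast
    ring
  calc _ ≤ (L + 2) * (2 * K + 2) * (δ ^ σ / δ ^ 2) * (2 * δ) ^ d := by
        gcongr ?_ * _
        exact card_grid_le hL hK hσ hδ0 hδ1
    _ = _ := by rw [mul_assoc, hscale]; ring

lemma hausdorffMeasure_eq_zero_of_covers {X β : Type*} [EMetricSpace X] [MeasurableSpace X]
    [BorelSpace X] {ι : β → Type*} [∀ b, Fintype (ι b)] {l : Filter β} [l.NeBot] {S : Set X}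
    {d : ℝ} (hd : 0 ≤ d) (r : β → ℝ≥0∞) (T : ∀ b, ι b → Set X) (hr : Tendsto r l (𝓝 0))
    (hdiam : ∀ b i, Metric.ediam (T b i) ≤ r b) (hcov : ∀ b, S ⊆ ⋃ i, T b i)
    (hsum : Tendsto (fun b => (Fintype.card (ι b) : ℝ≥0∞) * r b ^ d) l (𝓝 0)) :
    μH[d] S = 0 := by
  have hsum_le : ∀ b, ∑ i, Metric.ediam (T b i) ^ d ≤ Fintype.card (ι b) * r b ^ d := fun b => by
    rw [← nsmul_eq_mul, ← Finset.card_univ, ← Finset.sum_const]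
    exact Finset.sum_le_sum fun i _ => ENNReal.rpow_le_rpow (hdiam b i) hd
  refine le_antisymm ?_ zero_le
  calc μH[d] S ≤ liminf (fun b => ∑ i, Metric.ediam (T b i) ^ d) l :=
        Measure.hausdorffMeasure_le_liminf_sum d S r hr T (.of_forall hdiam) (.of_forall hcov)
    _ ≤ liminf (fun b => (Fintype.card (ι b) : ℝ≥0∞) * r b ^ d) l :=
        liminf_le_liminf (.of_forall hsum_le)
    _ = 0 := hsum.liminf_eq

theorem hausdorffMeasure_graphE_eq_zero_of_holder {f : ℝ → ℝ} {s : Set ℝ} {a b K σ d : ℝ}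
    (hσ0 : 0 ≤ σ) (hσ1 : σ ≤ 1) (hK : 0 ≤ K) (hs : s ⊆ Icc a b)
    (hH : ∀ u ∈ s, ∀ v ∈ s, |f u - f v| ≤ K * |u - v| ^ σ) (hd : 2 - σ < d) :
    μH[d] (graphE f s) = 0 := by
  rcases s.eq_empty_or_nonempty with rfl | ⟨u, hu⟩
  · simp [graphE_eq_image]
  have hab : 0 ≤ b - a := sub_nonneg.2 ((hs hu).1.trans (hs hu).2)
  set δ : ℕ → ℝ := fun n => 1 / ((n : ℝ) + 1)
  have hδ0 : ∀ n, 0 < δ n := fun n => by positivity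
  have hδ1 : ∀ n, δ n ≤ 1 := fun n =>
    div_le_one_of_le₀ (by linarith [(n.cast_nonneg : (0 : ℝ) ≤ n)]) (by positivity)
  have hδ : Tendsto δ atTop (𝓝 0) := tendsto_one_div_add_atTop_nhds_zero_nat
  choose T hT using fun n => graphE_subset_iUnion_of_holder hσ0 hK (hδ0 n) hs hH
  refine hausdorffMeasure_eq_zero_of_covers (by linarith) (fun n => ENNReal.ofReal (2 * δ n)) T
    (by simpa using ENNReal.tendsto_ofReal (hδ.const_mul 2)) (fun n => (hT n).1)
    (fun n => (hT n).2) ?_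
  set e := σ + d - 2
  have he : 0 < e := by linarith
  have hbound : ∀ n, (Fintype.card (Fin (⌈(b - a) / δ n⌉₊ + 1) ×
      Fin (⌈2 * (K * δ n ^ σ) / δ n⌉₊ + 1)) : ℝ≥0∞) * ENNReal.ofReal (2 * δ n) ^ d ≤
      ENNReal.ofReal ((b - a + 2) * (2 * K + 2) * 2 ^ d * δ n ^ e) := fun n => by
    rw [Fintype.card_prod, Fintype.card_fin, Fintype.card_fin,
      ENNReal.ofReal_rpow_of_pos (by linarith [hδ0 n]), ← ENNReal.ofReal_natCast,
      ← ENNReal.ofReal_mul (Nat.cast_nonneg _), Nat.cast_mul]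
    exact ENNReal.ofReal_le_ofReal (card_grid_mul_rpow_le hab hK hσ1 (hδ0 n) (hδ1 n) d)
  have hlim : Tendsto (fun n => (b - a + 2) * (2 * K + 2) * 2 ^ d * δ n ^ e) atTop (𝓝 0) := by
    have := ((Real.continuousAt_rpow_const 0 e (Or.inr he.le)).tendsto.comp hδ).const_mul
      ((b - a + 2) * (2 * K + 2) * 2 ^ d)
    simpa [Real.zero_rpow he.ne'] using this
  exact tendsto_of_tendsto_of_tendsto_of_le_of_le tendsto_const_nhds
    (by simpa using ENNReal.tendsto_ofReal hlim) (fun _ => zero_le) hbound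

theorem dimH_graphE_le_of_holder {f : ℝ → ℝ} {s : Set ℝ} {a b K σ : ℝ}
    (hσ0 : 0 ≤ σ) (hσ1 : σ ≤ 1) (hK : 0 ≤ K) (hs : s ⊆ Icc a b)
    (hH : ∀ u ∈ s, ∀ v ∈ s, |f u - f v| ≤ K * |u - v| ^ σ) :
    dimH (graphE f s) ≤ ENNReal.ofReal (2 - σ) := by
  refine dimH_le fun d hd => le_of_not_gt fun hlt => ?_
  have hlt' : 2 - σ < d := by
    rwa [← ENNReal.ofReal_coe_nnreal, ENNReal.ofReal_lt_ofReal_iff_of_nonneg (by linarith)] at hlt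
  rw [hausdorffMeasure_graphE_eq_zero_of_holder hσ0 hσ1 hK hs hH hlt'] at hd
  exact ENNReal.zero_ne_top hd

lemma ball_subset_insert_iUnion (t ρ : ℝ) :
    Metric.ball t ρ ⊆ insert t (⋃ n : ℕ, {u ∈ Metric.ball t ρ | 1 / ((n : ℝ) + 1) ≤ |u - t|}) := by
  intro u hu
  rcases eq_or_ne u t with rfl | hut
  · exact mem_insert _ _
  obtain ⟨n, hn⟩ := exists_nat_one_div_lt (abs_pos.2 (sub_ne_zero.2 hut))
  exact mem_insert_of_mem _ (mem_iUnion.2 ⟨n, hu, hn.le⟩)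

lemma holder_on_ball_of_le_abs_sub {f : ℝ → ℝ} {t ρ σ s' C ε : ℝ} (hs' : 0 ≤ s') (hC : 0 ≤ C)
    (hε : 0 < ε)
    (hb : ∀ u ∈ Metric.ball t ρ, ∀ v ∈ Metric.ball t ρ, (u, v) ≠ (t, t) →
      |f u - f v| ≤ C * |u - v| ^ σ * (|u - t| + |v - t|) ^ (-s')) :
    ∀ u ∈ {u ∈ Metric.ball t ρ | ε ≤ |u - t|}, ∀ v ∈ {u ∈ Metric.ball t ρ | ε ≤ |u - t|},
      |f u - f v| ≤ C * ε ^ (-s') * |u - v| ^ σ := by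
  rintro u ⟨hu, hεu⟩ v ⟨hv, -⟩
  have hut : u ≠ t := fun h => by simp [h] at hεu; linarith
  have hweight : (|u - t| + |v - t|) ^ (-s') ≤ ε ^ (-s') :=
    Real.rpow_le_rpow_of_nonpos hε (by linarith [abs_nonneg (v - t)]) (neg_nonpos.2 hs')
  calc |f u - f v| ≤ C * |u - v| ^ σ * (|u - t| + |v - t|) ^ (-s') :=
        hb u hu v hv fun h => hut (congrArg Prod.fst h)
    _ ≤ C * |u - v| ^ σ * ε ^ (-s') := by gcongr
    _ = C * ε ^ (-s') * |u - v| ^ σ := by ring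

theorem stmt_2_general (f : ℝ → ℝ) (t σ : ℝ) (hσ0 : 0 < σ) (hσ1 : σ < 1)
    (hbound : ∃ s' ≥ (0 : ℝ), ∃ C > (0 : ℝ), ∃ ρ > (0 : ℝ),
      ∀ u ∈ Metric.ball t ρ, ∀ v ∈ Metric.ball t ρ, (u, v) ≠ (t, t) →
        |f u - f v| ≤ C * |u - v| ^ σ * (|u - t| + |v - t|) ^ (-s')) :
    hausLoc f t ≤ ENNReal.ofReal (2 - σ) := by
  obtain ⟨s', hs', C, hC, ρ, hρ, hb⟩ := hbound
  have hannulus : ∀ n : ℕ, dimH (graphE f {u ∈ Metric.ball t ρ | 1 / ((n : ℝ) + 1) ≤ |u - t|}) ≤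
      ENNReal.ofReal (2 - σ) := fun n =>
    dimH_graphE_le_of_holder hσ0.le hσ1.le (by positivity)
      (fun u hu => Ioo_subset_Icc_self (Real.ball_eq_Ioo t ρ ▸ hu.1))
      (holder_on_ball_of_le_abs_sub hs' hC.le (by positivity) hb)
  refine (iInf₂_le ρ hρ).trans ?_
  rw [← Real.ball_eq_Ioo]
  calc dimH (graphE f (Metric.ball t ρ))
      ≤ dimH (graphE f {t} ∪ ⋃ n : ℕ,
          graphE f {u ∈ Metric.ball t ρ | 1 / ((n : ℝ) + 1) ≤ |u - t|}) := by
        simp only [graphE_eq_image, ← image_iUnion, ← image_union, ← insert_eq]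
        exact dimH_mono (image_mono (ball_subset_insert_iUnion t ρ))
    _ ≤ ENNReal.ofReal (2 - σ) := by
        rw [dimH_union, dimH_iUnion, graphE_eq_image, image_singleton, dimH_singleton]
        exact max_le zero_le (iSup_le hannulus)

/-- If there are `s' ≥ 0`, `C > 0` and `ρ > 0` with
`|f u − f v| ≤ C |u−v|^σ (|u−t|+|v−t|)^{−s'}` for `u, v ∈ B(t,ρ)`, `(u,v) ≠ (t,t)`, then the
local Hausdorff dimension of the graph of `f` at `t` is at most `2 − σ`. -/
theorem stmt_2 (f : ℝ → ℝ) (hf : Continuous f) (t σ : ℝ) (hσ0 : 0 < σ) (hσ1 : σ < 1)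
    (hbound : ∃ s' ≥ (0 : ℝ), ∃ C > (0 : ℝ), ∃ ρ > (0 : ℝ),
      ∀ u ∈ Metric.ball t ρ, ∀ v ∈ Metric.ball t ρ, (u, v) ≠ (t, t) →
        |f u - f v| ≤ C * |u - v| ^ σ * (|u - t| + |v - t|) ^ (-s')) :
    hausLoc f t ≤ ENNReal.ofReal (2 - σ) :=
  stmt_2_general f t σ hσ0 hσ1 hbound
end

section
/- For every set A ⊆ ℝ² and all real numbers H₁, H₂ with 0 < H₂ < H₁ ≤ 1, the parabolic Hausdorff dimensions satisfy dimH(A; ϱ_{H₂}) − (1/H₂ − 1/H₁) ≤ dimH(A; ϱ_{H₁}) ≤ 1 + (H₂/H₁)(dimH(A; ϱ_{H₂}) − 1). -/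
open Filter MeasureTheory Set Topology
open scoped ENNReal NNReal

/-- The parabolic metric `ϱ_H((u,x),(v,y)) = max(|u−v|^H, |x−y|)` on `ℝ²`. -/
noncomputable def pDist (H : ℝ) (p q : ℝ × ℝ) : ℝ :=
  max (|p.1 - q.1| ^ H) |p.2 - q.2|

/-- Diameter of a set with respect to the parabolic metric `ϱ_H` (in `ℝ≥0∞`). -/
noncomputable def pDiam (H : ℝ) (S : Set (ℝ × ℝ)) : ℝ≥0∞ :=
  ⨆ (p : ℝ × ℝ) (_ : p ∈ S) (q : ℝ × ℝ) (_ : q ∈ S), ENNReal.ofReal (pDist H p q)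

/-- `A` is null for the `s`-dimensional Hausdorff measure in the parabolic metric `ϱ_H`:
for every `ε > 0` there is a countable cover of `A` by sets of `ϱ_H`-diameter at most `ε`
whose sum of `s`-th powers of diameters is less than `ε`. -/
def pNull (H s : ℝ) (A : Set (ℝ × ℝ)) : Prop :=
  ∀ ε : ℝ, 0 < ε → ∃ U : ℕ → Set (ℝ × ℝ), A ⊆ ⋃ n, U n ∧
    (∀ n, pDiam H (U n) ≤ ENNReal.ofReal ε) ∧
    (∑' n, pDiam H (U n) ^ s) < ENNReal.ofReal ε

/-- The Hausdorff dimension of `A ⊆ ℝ²` computed in the parabolic metric `ϱ_H`: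
the infimum of the nonnegative exponents `s` for which the `s`-dimensional parabolic
Hausdorff measure of `A` vanishes. -/
noncomputable def pDimH (H : ℝ) (A : Set (ℝ × ℝ)) : ℝ :=
  sInf {s : ℝ | 0 ≤ s ∧ pNull H s A}

/-!
A set of `ϱ_{H₁}`-diameter `d ≤ 1` fits in a `d^{1/H₁} × d` box. Cutting it into vertical strips
of width `d^{1/H₂}` gives about `d^{-(1/H₂ - 1/H₁)}` pieces of `ϱ_{H₂}`-diameter `d`, so every
cover witnessing `s`-nullity for `ϱ_{H₁}` refines to one witnessing `(s + 1/H₂ - 1/H₁)`-nullity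
for `ϱ_{H₂}`. Symmetrically, a set of `ϱ_{H₂}`-diameter `d` fits in a `d^{1/H₂} × d` box, and
cutting it into horizontal strips of height `d^{H₁/H₂}` gives about `d^{1 - H₁/H₂}` pieces of
`ϱ_{H₁}`-diameter `d^{H₁/H₂}`; the exponent `σ = 1 + (H₂/H₁)(s - 1)` is the one for which
`d^{1 - H₁/H₂} · (d^{H₁/H₂})^σ = d^s`. Both bounds follow by taking infima over the exponents.
-/

lemma pDiam_le_ofReal_iff {H d : ℝ} {S : Set (ℝ × ℝ)} (hd : 0 ≤ d) :
    pDiam H S ≤ ENNReal.ofReal d ↔ ∀ p ∈ S, ∀ q ∈ S, pDist H p q ≤ d := by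
  simp only [pDiam, iSup_le_iff, ENNReal.ofReal_le_ofReal_iff hd]

lemma pDist_le_iff {H d : ℝ} {p q : ℝ × ℝ} (hH : 0 < H) (hd : 0 ≤ d) :
    pDist H p q ≤ d ↔ |p.1 - q.1| ≤ d ^ H⁻¹ ∧ |p.2 - q.2| ≤ d := by
  rw [pDist, max_le_iff, Real.le_rpow_inv_iff_of_pos (abs_nonneg _) hd hH]

@[simp]
lemma pDiam_empty (H : ℝ) : pDiam H ∅ = 0 := by
  simp [pDiam]

lemma pDiam_eq_zero_iff {H : ℝ} {S : Set (ℝ × ℝ)} (hH : 0 < H) :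
    pDiam H S = 0 ↔ S.Subsingleton := by
  rw [← nonpos_iff_eq_zero, ← ENNReal.ofReal_zero, pDiam_le_ofReal_iff le_rfl]
  simp only [pDist_le_iff hH le_rfl, Real.zero_rpow (inv_ne_zero hH.ne'), abs_nonpos_iff,
    sub_eq_zero, ← Prod.ext_iff]
  rfl

lemma exists_floor_strips {X : Type*} (U : Set X) (f : X → ℝ) {a M L : ℝ} (hL : 0 < L)
    (hf : ∀ p ∈ U, f p ∈ Icc a (a + M)) :
    ∃ V : ℕ → Set X, U ⊆ ⋃ k, V k ∧ (∀ k, V k ⊆ U) ∧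
      (∀ k, ∀ p ∈ V k, ∀ q ∈ V k, |f p - f q| ≤ L) ∧ ∀ k, ⌊M / L⌋₊ < k → V k = ∅ := by
  refine ⟨fun k => {p ∈ U | ⌊(f p - a) / L⌋₊ = k}, fun p hp => mem_iUnion.2 ⟨_, hp, rfl⟩,
    fun k p hp => hp.1, ?_, ?_⟩
  · rintro k p ⟨hpU, hpk⟩ q ⟨hqU, hqk⟩
    have hfloor : ∀ r ∈ U, ⌊(f r - a) / L⌋₊ = k →
        (k : ℝ) * L ≤ f r - a ∧ f r - a < (k + 1) * L := by
      intro r hr hrk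
      have hnonneg : 0 ≤ (f r - a) / L := div_nonneg (by linarith [(hf r hr).1]) hL.le
      have hlo := Nat.floor_le hnonneg
      have hhi := Nat.lt_floor_add_one ((f r - a) / L)
      rw [hrk, le_div_iff₀ hL] at hlo
      rw [hrk, div_lt_iff₀ hL] at hhi
      exact ⟨hlo, hhi⟩
    obtain ⟨hp₁, hp₂⟩ := hfloor p hpU hpk
    obtain ⟨hq₁, hq₂⟩ := hfloor q hqU hqk
    rw [abs_le]
    constructor <;> linarith
  · intro k hk
    refine eq_empty_of_forall_notMem fun p ⟨hpU, hpk⟩ => hk.not_ge ?_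
    rw [← hpk]
    exact Nat.floor_le_floor (div_le_div_of_nonneg_right (by linarith [(hf p hpU).2]) hL.le)

lemma ENNReal.tsum_le_mul_of_forall_lt_eq_zero {g : ℕ → ℝ≥0∞} {N : ℕ} {D : ℝ≥0∞}
    (hzero : ∀ k, N < k → g k = 0) (hle : ∀ k, g k ≤ D) : ∑' k, g k ≤ (N + 1) * D := by
  rw [tsum_eq_sum (s := Finset.range (N + 1)) fun k hk => hzero k (by simpa using hk)]
  calc ∑ k ∈ Finset.range (N + 1), g k ≤ (Finset.range (N + 1)).card • D :=
        Finset.sum_le_card_nsmul _ _ _ fun k _ => hle k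
    _ = (N + 1) * D := by simp [nsmul_eq_mul]

lemma exists_strip_cover {U : Set (ℝ × ℝ)} (f : ℝ × ℝ → ℝ) {H M L D t : ℝ} (hL : 0 < L)
    (hM₀ : 0 ≤ M) (hD : 0 ≤ D) (ht : 0 < t) (hM : ∀ p ∈ U, ∀ q ∈ U, |f p - f q| ≤ M)
    (hstrip : ∀ S ⊆ U, (∀ p ∈ S, ∀ q ∈ S, |f p - f q| ≤ L) → pDiam H S ≤ ENNReal.ofReal D) :
    ∃ V : ℕ → Set (ℝ × ℝ), U ⊆ ⋃ k, V k ∧ (∀ k, pDiam H (V k) ≤ ENNReal.ofReal D) ∧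
      ∑' k, pDiam H (V k) ^ t ≤ ENNReal.ofReal ((2 * M / L + 1) * D ^ t) := by
  obtain ⟨a, ha⟩ : ∃ a, ∀ p ∈ U, f p ∈ Icc a (a + 2 * M) := by
    rcases U.eq_empty_or_nonempty with rfl | ⟨p₀, hp₀⟩
    · exact ⟨0, by simp⟩
    refine ⟨f p₀ - M, fun p hp => ?_⟩
    have := abs_le.1 (hM p hp p₀ hp₀)
    constructor <;> linarith
  obtain ⟨V, hcov, hsub, hwidth, hempty⟩ := exists_floor_strips U f hL ha
  have hdiam k : pDiam H (V k) ≤ ENNReal.ofReal D := hstrip _ (hsub k) (hwidth k)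
  refine ⟨V, hcov, hdiam, ?_⟩
  calc ∑' k, pDiam H (V k) ^ t
      ≤ (⌊2 * M / L⌋₊ + 1) * ENNReal.ofReal D ^ t :=
        ENNReal.tsum_le_mul_of_forall_lt_eq_zero
          (fun k hk => by rw [hempty k hk, pDiam_empty, ENNReal.zero_rpow_of_pos ht])
          (fun k => ENNReal.rpow_le_rpow (hdiam k) ht.le)
    _ = ENNReal.ofReal ((⌊2 * M / L⌋₊ + 1) * D ^ t) := by
        rw [ENNReal.ofReal_rpow_of_nonneg hD ht.le, ENNReal.ofReal_mul (by positivity)]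
        norm_cast
    _ ≤ ENNReal.ofReal ((2 * M / L + 1) * D ^ t) := by
        gcongr
        exact Nat.floor_le (by positivity)

def PRefinable (Ha Hb s t C : ℝ) : Prop :=
  ∀ d, 0 < d → d ≤ 1 → ∀ U, pDiam Ha U ≤ ENNReal.ofReal d →
    ∃ V : ℕ → Set (ℝ × ℝ), U ⊆ ⋃ k, V k ∧ (∀ k, pDiam Hb (V k) ≤ ENNReal.ofReal d) ∧
      ∑' k, pDiam Hb (V k) ^ t ≤ ENNReal.ofReal (C * d ^ s)

section Refinement

variable {Ha Hb s t C : ℝ}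

lemma exists_refinement_of_pDiam_le_one (hHa : 0 < Ha) (hHb : 0 < Hb) (ht : 0 < t)
    (hC : 0 ≤ C) (href : PRefinable Ha Hb s t C) {U : Set (ℝ × ℝ)} (hU : pDiam Ha U ≤ 1) :
    ∃ V : ℕ → Set (ℝ × ℝ), U ⊆ ⋃ k, V k ∧ (∀ k, pDiam Hb (V k) ≤ pDiam Ha U) ∧
      ∑' k, pDiam Hb (V k) ^ t ≤ ENNReal.ofReal C * pDiam Ha U ^ s := by
  rcases eq_or_ne (pDiam Ha U) 0 with h0 | h0
  · have hb : pDiam Hb U = 0 := (pDiam_eq_zero_iff hHb).2 ((pDiam_eq_zero_iff hHa).1 h0)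
    refine ⟨fun _ => U, subset_iUnion (fun _ => U) 0, fun _ => by rw [hb, h0], ?_⟩
    simp [hb, ENNReal.zero_rpow_of_pos ht]
  have hfin : pDiam Ha U ≠ ⊤ := ne_top_of_le_ne_top ENNReal.one_ne_top hU
  set d := (pDiam Ha U).toReal
  have hd : 0 < d := ENNReal.toReal_pos h0 hfin
  have hdU : ENNReal.ofReal d = pDiam Ha U := ENNReal.ofReal_toReal hfin
  obtain ⟨V, hcov, hdiam, hsum⟩ :=
    href d hd (ENNReal.toReal_le_of_le_ofReal zero_le_one (by simpa using hU)) U hdU.ge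
  refine ⟨V, hcov, fun k => hdU ▸ hdiam k, hsum.trans_eq ?_⟩
  rw [ENNReal.ofReal_mul hC, ← ENNReal.ofReal_rpow_of_pos hd, hdU]

lemma pNull.of_pRefinable (hHa : 0 < Ha) (hHb : 0 < Hb) (ht : 0 < t) (hC : 0 ≤ C)
    (href : PRefinable Ha Hb s t C) {A : Set (ℝ × ℝ)} (hA : pNull Ha s A) : pNull Hb t A := by
  intro ε hε
  set ε' := min ε 1 / (C + 1)
  have hε' : 0 < ε' := by positivity
  have hε'min : (C + 1) * ε' = min ε 1 := mul_div_cancel₀ _ (by positivity)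
  have hε'1 : ε' ≤ 1 := by nlinarith [min_le_right ε 1]
  have hε'ε : ε' ≤ ε := by nlinarith [min_le_left ε 1]
  have hCε' : C * ε' < ε := by nlinarith [min_le_left ε 1]
  obtain ⟨U, hcov, hdiam, hsum⟩ := hA ε' hε'
  choose V hVcov hVdiam hVsum using fun n => exists_refinement_of_pDiam_le_one hHa hHb ht hC
    href ((hdiam n).trans (ENNReal.ofReal_le_one.2 hε'1))
  refine ⟨fun m => V (Nat.unpair m).1 (Nat.unpair m).2, fun x hx => ?_, fun m => ?_, ?_⟩
  · obtain ⟨n, hn⟩ := mem_iUnion.1 (hcov hx)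
    obtain ⟨k, hk⟩ := mem_iUnion.1 (hVcov n hn)
    exact mem_iUnion.2 ⟨Nat.pair n k, by simpa using hk⟩
  · exact (hVdiam _ _).trans ((hdiam _).trans (ENNReal.ofReal_le_ofReal hε'ε))
  calc ∑' m, pDiam Hb (V (Nat.unpair m).1 (Nat.unpair m).2) ^ t
      = ∑' n, ∑' k, pDiam Hb (V n k) ^ t := by
        rw [← ENNReal.tsum_prod]
        exact Nat.pairEquiv.symm.tsum_eq (fun p : ℕ × ℕ => pDiam Hb (V p.1 p.2) ^ t)
    _ ≤ ∑' n, ENNReal.ofReal C * pDiam Ha (U n) ^ s := ENNReal.tsum_le_tsum hVsum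
    _ = ENNReal.ofReal C * ∑' n, pDiam Ha (U n) ^ s := ENNReal.tsum_mul_left
    _ ≤ ENNReal.ofReal (C * ε') := by
        rw [ENNReal.ofReal_mul hC]; gcongr
    _ < ENNReal.ofReal ε := (ENNReal.ofReal_lt_ofReal_iff hε).2 hCε'

end Refinement

section Transfer

variable {H₁ H₂ s : ℝ}

lemma one_add_div_mul_sub_one_pos (h₂ : 0 < H₂) (h₂₁ : H₂ < H₁) (hs : 0 ≤ s) :
    0 < 1 + H₂ / H₁ * (s - 1) := by
  have hr : 0 < H₂ / H₁ := div_pos h₂ (h₂.trans h₂₁)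
  have hr₁ : H₂ / H₁ < 1 := (div_lt_one (h₂.trans h₂₁)).2 h₂₁
  nlinarith

lemma pRefinable_add_inv_sub_inv (h₂ : 0 < H₂) (h₂₁ : H₂ < H₁) (hs : 0 ≤ s) :
    PRefinable H₁ H₂ s (s + (H₂⁻¹ - H₁⁻¹)) 3 := by
  intro d hd hd1 U hU
  have h₁ : 0 < H₁ := h₂.trans h₂₁
  have hΔ : 0 < H₂⁻¹ - H₁⁻¹ := sub_pos.2 (inv_strictAnti₀ h₂ h₂₁)
  simp only [pDiam_le_ofReal_iff hd.le, pDist_le_iff h₁ hd.le] at hU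
  obtain ⟨V, hcov, hdiam, hsum⟩ := exists_strip_cover Prod.fst (H := H₂) (M := d ^ H₁⁻¹)
    (t := s + (H₂⁻¹ - H₁⁻¹)) (Real.rpow_pos_of_pos hd H₂⁻¹) (by positivity) hd.le (by linarith)
    (fun p hp q hq => (hU p hp q hq).1) fun S hS hwidth => by
      simp only [pDiam_le_ofReal_iff hd.le, pDist_le_iff h₂ hd.le]
      exact fun p hp q hq => ⟨hwidth p hp q hq, (hU p (hS hp) q (hS hq)).2⟩
  refine ⟨V, hcov, hdiam, hsum.trans (ENNReal.ofReal_le_ofReal ?_)⟩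
  have hmain : 2 * d ^ H₁⁻¹ / d ^ H₂⁻¹ * d ^ (s + (H₂⁻¹ - H₁⁻¹)) = 2 * d ^ s := by
    rw [mul_div_assoc, mul_assoc, ← Real.rpow_sub hd, ← Real.rpow_add hd]
    ring_nf
  have hsmall : d ^ (s + (H₂⁻¹ - H₁⁻¹)) ≤ d ^ s :=
    Real.rpow_le_rpow_of_exponent_ge hd hd1 (by linarith)
  linear_combination hmain + hsmall

lemma pRefinable_one_add_div_mul_sub_one (h₂ : 0 < H₂) (h₂₁ : H₂ < H₁) (hs : 0 ≤ s) :
    PRefinable H₂ H₁ s (1 + H₂ / H₁ * (s - 1)) 3 := by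
  intro d hd hd1 U hU
  have h₁ : 0 < H₁ := h₂.trans h₂₁
  have hq₁ : 1 ≤ H₁ / H₂ := (one_le_div h₂).2 h₂₁.le
  simp only [pDiam_le_ofReal_iff hd.le, pDist_le_iff h₂ hd.le] at hU
  set L := d ^ (H₁ / H₂)
  have hL : 0 < L := Real.rpow_pos_of_pos hd _
  have hLd : L ≤ d := by
    simpa using Real.rpow_le_rpow_of_exponent_ge hd hd1 hq₁
  obtain ⟨V, hcov, hdiam, hsum⟩ := exists_strip_cover Prod.snd (H := H₁) (M := d)
    (t := 1 + H₂ / H₁ * (s - 1)) hL hd.le hL.le (one_add_div_mul_sub_one_pos h₂ h₂₁ hs)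
    (fun p hp q hq => (hU p hp q hq).2) fun S hS hwidth => by
      have hLH : L ^ H₁⁻¹ = d ^ H₂⁻¹ := by
        rw [← Real.rpow_mul hd.le]
        field_simp
      simp only [pDiam_le_ofReal_iff hL.le, pDist_le_iff h₁ hL.le, hLH]
      exact fun p hp q hq => ⟨(hU p (hS hp) q (hS hq)).1, hwidth p hp q hq⟩
  refine ⟨V, hcov, fun k => (hdiam k).trans (ENNReal.ofReal_le_ofReal hLd),
    hsum.trans (ENNReal.ofReal_le_ofReal ?_)⟩
  have hLσ : L ^ (1 + H₂ / H₁ * (s - 1)) = d ^ (s + (H₁ / H₂ - 1)) := by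
    rw [← Real.rpow_mul hd.le]
    congr 1
    field_simp
    ring
  have hmain : 2 * d / L * d ^ (s + (H₁ / H₂ - 1)) = 2 * d ^ s := by
    have hdL : d / L = d ^ (1 - H₁ / H₂) := by rw [Real.rpow_sub hd, Real.rpow_one]
    rw [mul_div_assoc, hdL, mul_assoc, ← Real.rpow_add hd]
    ring_nf
  have hsmall : d ^ (s + (H₁ / H₂ - 1)) ≤ d ^ s :=
    Real.rpow_le_rpow_of_exponent_ge hd hd1 (by linarith)
  rw [hLσ]
  linear_combination hmain + hsmall

variable {A : Set (ℝ × ℝ)}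

lemma pNull.add_inv_sub_inv (h₂ : 0 < H₂) (h₂₁ : H₂ < H₁) (hs : 0 ≤ s) (hA : pNull H₁ s A) :
    pNull H₂ (s + (H₂⁻¹ - H₁⁻¹)) A :=
  pNull.of_pRefinable (h₂.trans h₂₁) h₂ (by linarith [inv_strictAnti₀ h₂ h₂₁]) (by norm_num)
    (pRefinable_add_inv_sub_inv h₂ h₂₁ hs) hA

lemma pNull.one_add_div_mul_sub_one (h₂ : 0 < H₂) (h₂₁ : H₂ < H₁) (hs : 0 ≤ s)
    (hA : pNull H₂ s A) : pNull H₁ (1 + H₂ / H₁ * (s - 1)) A :=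
  pNull.of_pRefinable h₂ (h₂.trans h₂₁) (one_add_div_mul_sub_one_pos h₂ h₂₁ hs) (by norm_num)
    (pRefinable_one_add_div_mul_sub_one h₂ h₂₁ hs) hA

end Transfer

lemma Real.sInf_le_add_mul_sInf {S T : Set ℝ} {a b : ℝ} (hb : 0 < b) (hS : S.Nonempty)
    (hT : BddBelow T) (h : ∀ s ∈ S, a + b * s ∈ T) : sInf T ≤ a + b * sInf S := by
  have : (sInf T - a) / b ≤ sInf S := le_csInf hS fun s hs => by
    rw [div_le_iff₀ hb]
    linarith [csInf_le hT (h s hs)]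
  rw [div_le_iff₀ hb] at this
  linarith

lemma pDimH_le_add_mul {H H' a b : ℝ} {A : Set (ℝ × ℝ)} (ha : 0 ≤ a) (hb : 0 < b)
    (hne : ∃ s, 0 ≤ s ∧ pNull H s A) (h : ∀ s, 0 ≤ s → pNull H s A → pNull H' (a + b * s) A) :
    pDimH H' A ≤ a + b * pDimH H A :=
  Real.sInf_le_add_mul_sInf hb hne ⟨0, fun _ hs => hs.1⟩ fun s ⟨hs, hN⟩ =>
    ⟨by positivity, h s hs hN⟩

lemma pDimH_eq_zero_of_not_exists {H : ℝ} {A : Set (ℝ × ℝ)}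
    (h : ¬∃ s, 0 ≤ s ∧ pNull H s A) : pDimH H A = 0 := by
  have hempty : {s : ℝ | 0 ≤ s ∧ pNull H s A} = ∅ :=
    eq_empty_of_forall_notMem fun s hs => h ⟨s, hs⟩
  rw [pDimH, hempty, Real.sInf_empty]

theorem stmt_3_general (A : Set (ℝ × ℝ)) (H₁ H₂ : ℝ) (h₂ : 0 < H₂) (h₂₁ : H₂ < H₁) :
    pDimH H₂ A - (1 / H₂ - 1 / H₁) ≤ pDimH H₁ A ∧
    pDimH H₁ A ≤ 1 + (H₂ / H₁) * (pDimH H₂ A - 1) := by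
  have h₁ : 0 < H₁ := h₂.trans h₂₁
  have hΔ : 0 < 1 / H₂ - 1 / H₁ := sub_pos.2 (one_div_lt_one_div_of_lt h₂ h₂₁)
  have hr : H₂ / H₁ < 1 := (div_lt_one h₁).2 h₂₁
  have hnull₁₂ s (hs : 0 ≤ s) (hN : pNull H₁ s A) : pNull H₂ ((1 / H₂ - 1 / H₁) + 1 * s) A := by
    convert hN.add_inv_sub_inv h₂ h₂₁ hs using 1
    simp only [one_div]
    ring
  have hnull₂₁ s (hs : 0 ≤ s) (hN : pNull H₂ s A) : pNull H₁ ((1 - H₂ / H₁) + H₂ / H₁ * s) A := by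
    convert hN.one_add_div_mul_sub_one h₂ h₂₁ hs using 1
    ring
  by_cases hne : ∃ s, 0 ≤ s ∧ pNull H₂ s A
  · obtain ⟨s, hs, hN⟩ := hne
    have hne₁ : ∃ s, 0 ≤ s ∧ pNull H₁ s A := ⟨_,
      (one_add_div_mul_sub_one_pos h₂ h₂₁ hs).le, hN.one_add_div_mul_sub_one h₂ h₂₁ hs⟩
    have hle₂ := pDimH_le_add_mul hΔ.le one_pos hne₁ hnull₁₂
    have hle₁ := pDimH_le_add_mul (by linarith) (div_pos h₂ h₁) ⟨s, hs, hN⟩ hnull₂₁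
    exact ⟨by linear_combination hle₂, by linear_combination hle₁⟩
  · have hne₁ : ¬∃ s, 0 ≤ s ∧ pNull H₁ s A := fun ⟨s, hs, hN⟩ =>
      hne ⟨_, by linarith, hnull₁₂ s hs hN⟩
    rw [pDimH_eq_zero_of_not_exists hne, pDimH_eq_zero_of_not_exists hne₁]
    constructor <;> linarith

/-- For every `A ⊆ ℝ²` and `0 < H₂ < H₁ ≤ 1`:
`dimH(A;ϱ_{H₂}) − (1/H₂ − 1/H₁) ≤ dimH(A;ϱ_{H₁}) ≤ 1 + (H₂/H₁)(dimH(A;ϱ_{H₂}) − 1)`. -/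
theorem stmt_3 (A : Set (ℝ × ℝ)) (H₁ H₂ : ℝ) (h₂ : 0 < H₂) (h₂₁ : H₂ < H₁) (h₁ : H₁ ≤ 1) :
    pDimH H₂ A - (1 / H₂ - 1 / H₁) ≤ pDimH H₁ A ∧
    pDimH H₁ A ≤ 1 + (H₂ / H₁) * (pDimH H₂ A - 1) :=
  stmt_3_general A H₁ H₂ h₂ h₂₁
end

section
/- Let A ⊆ ℝ² and let H : ℝ → (0,1] be a continuous function. Then the map t ↦ dimH(A; ϱ_{H(t)}) is continuous on ℝ. -/
open Filter MeasureTheory Set Topology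
open scoped ENNReal NNReal

lemma pDist_nonneg' (H : ℝ) (p q : ℝ × ℝ) : 0 ≤ pDist H p q :=
  le_trans (abs_nonneg _) (le_max_right _ _)

lemma rpow_le_one_imp {h x : ℝ} (hh : 0 < h) (hx0 : 0 ≤ x) (hx : x ^ h ≤ 1) : x ≤ 1 := by
  by_contra hgt
  push_neg at hgt
  have h1 : 1 < x ^ h := (Real.one_lt_rpow_iff_of_pos (lt_trans one_pos hgt)).2 (Or.inl ⟨hgt, hh⟩)
  linarith

lemma pDist_anti' {h1 h2 : ℝ} (h1p : 0 < h1) (h12 : h1 ≤ h2) {p q : ℝ × ℝ}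
    (ha : |p.1 - q.1| ≤ 1) : pDist h2 p q ≤ pDist h1 p q := by
  unfold pDist
  apply max_le_max _ le_rfl
  rcases eq_or_lt_of_le (abs_nonneg (p.1 - q.1)) with h0 | h0
  · rw [← h0, Real.zero_rpow (ne_of_gt (lt_of_lt_of_le h1p h12)),
      Real.zero_rpow (ne_of_gt h1p)]
  · exact Real.rpow_le_rpow_of_exponent_ge h0 ha h12

lemma pDist_rpow' {h1 h2 : ℝ} (h1p : 0 < h1) (h12 : h1 ≤ h2) {p q : ℝ × ℝ}
    (hd : pDist h2 p q ≤ 1) : pDist h1 p q ≤ (pDist h2 p q) ^ (h1 / h2) := by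
  have h2p : 0 < h2 := lt_of_lt_of_le h1p h12
  have ha0 : (0:ℝ) ≤ |p.1 - q.1| := abs_nonneg _
  have hb0 : (0:ℝ) ≤ |p.2 - q.2| := abs_nonneg _
  have hab : |p.1 - q.1| ^ h2 ≤ 1 := le_trans (le_max_left _ _) hd
  have hm0 : 0 ≤ pDist h2 p q := pDist_nonneg' _ _ _
  have key1 : |p.1 - q.1| ^ h1 ≤ (pDist h2 p q) ^ (h1 / h2) := by
    have he : |p.1 - q.1| ^ h1 = (|p.1 - q.1| ^ h2) ^ (h1 / h2) := by
      rw [← Real.rpow_mul ha0]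
      congr 1
      field_simp
    rw [he]
    exact Real.rpow_le_rpow (Real.rpow_nonneg ha0 _) (le_max_left _ _) (by positivity)
  have key2 : |p.2 - q.2| ≤ (pDist h2 p q) ^ (h1 / h2) := by
    rcases eq_or_lt_of_le hm0 with h0 | h0
    · have hb' : |p.2 - q.2| = 0 :=
        le_antisymm (le_trans (le_max_right (|p.1 - q.1| ^ h2) _) h0.symm.le) hb0
      rw [hb']
      positivity
    · calc |p.2 - q.2| ≤ pDist h2 p q := le_max_right _ _
        _ = (pDist h2 p q) ^ (1:ℝ) := (Real.rpow_one _).symm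
        _ ≤ (pDist h2 p q) ^ (h1 / h2) := Real.rpow_le_rpow_of_exponent_ge h0 hd
            (by rw [div_le_one h2p]; exact h12)
  exact max_le key1 key2

lemma ofReal_pDist_le_pDiam (H : ℝ) {S : Set (ℝ × ℝ)} {p q : ℝ × ℝ}
    (hp : p ∈ S) (hq : q ∈ S) : ENNReal.ofReal (pDist H p q) ≤ pDiam H S :=
  le_iSup₂_of_le p hp (le_iSup₂_of_le q hq le_rfl)

lemma pDiam_le_of_forall {H : ℝ} {S : Set (ℝ × ℝ)} {c : ℝ≥0∞}
    (h : ∀ p ∈ S, ∀ q ∈ S, ENNReal.ofReal (pDist H p q) ≤ c) : pDiam H S ≤ c := by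
  unfold pDiam
  exact iSup₂_le fun p hp => iSup₂_le fun q hq => h p hp q hq

lemma pDist_le_of_pDiam {H ε : ℝ} (hε : 0 ≤ ε) {S : Set (ℝ × ℝ)}
    (h : pDiam H S ≤ ENNReal.ofReal ε) {p q : ℝ × ℝ} (hp : p ∈ S) (hq : q ∈ S) :
    pDist H p q ≤ ε := by
  have h2 := le_trans (ofReal_pDist_le_pDiam H hp hq) h
  rwa [ENNReal.ofReal_le_ofReal_iff hε] at h2

lemma pDiam_anti' {h1 h2 : ℝ} (h1p : 0 < h1) (h12 : h1 ≤ h2) {S : Set (ℝ × ℝ)}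
    (hd : pDiam h1 S ≤ 1) : pDiam h2 S ≤ pDiam h1 S := by
  refine pDiam_le_of_forall fun p hp q hq => ?_
  refine le_trans (ENNReal.ofReal_le_ofReal (pDist_anti' h1p h12 ?_))
    (ofReal_pDist_le_pDiam h1 hp hq)
  have hle : pDist h1 p q ≤ 1 :=
    pDist_le_of_pDiam one_pos.le (by rwa [ENNReal.ofReal_one]) hp hq
  exact rpow_le_one_imp h1p (abs_nonneg _) (le_trans (le_max_left _ _) hle)

lemma pDiam_rpow' {h1 h2 : ℝ} (h1p : 0 < h1) (h12 : h1 ≤ h2) {S : Set (ℝ × ℝ)}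
    (hd : pDiam h2 S ≤ 1) : pDiam h1 S ≤ (pDiam h2 S) ^ (h1 / h2) := by
  have h2p : 0 < h2 := lt_of_lt_of_le h1p h12
  have hdiv : (0:ℝ) ≤ h1 / h2 := by positivity
  refine pDiam_le_of_forall fun p hp q hq => ?_
  have hle : pDist h2 p q ≤ 1 :=
    pDist_le_of_pDiam one_pos.le (by rwa [ENNReal.ofReal_one]) hp hq
  calc ENNReal.ofReal (pDist h1 p q)
      ≤ ENNReal.ofReal ((pDist h2 p q) ^ (h1 / h2)) :=
        ENNReal.ofReal_le_ofReal (pDist_rpow' h1p h12 hle)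
    _ = (ENNReal.ofReal (pDist h2 p q)) ^ (h1 / h2) :=
        (ENNReal.ofReal_rpow_of_nonneg (pDist_nonneg' _ _ _) hdiv).symm
    _ ≤ (pDiam h2 S) ^ (h1 / h2) :=
        ENNReal.rpow_le_rpow (ofReal_pDist_le_pDiam h2 hp hq) hdiv

lemma pNull_mono' {h1 h2 s : ℝ} (h1p : 0 < h1) (h12 : h1 ≤ h2) (hs : 0 ≤ s)
    {A : Set (ℝ × ℝ)} (hn : pNull h1 s A) : pNull h2 s A := by
  intro ε εpos
  obtain ⟨U, hcov, hdiam, hsum⟩ := hn (min ε 1) (lt_min εpos one_pos)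
  have hd1 : ∀ n, pDiam h1 (U n) ≤ 1 := fun n =>
    le_trans (hdiam n) (by
      rw [← ENNReal.ofReal_one]
      exact ENNReal.ofReal_le_ofReal (min_le_right _ _))
  have hd' : ∀ n, pDiam h2 (U n) ≤ pDiam h1 (U n) := fun n => pDiam_anti' h1p h12 (hd1 n)
  refine ⟨U, hcov, fun n => le_trans (hd' n)
    (le_trans (hdiam n) (ENNReal.ofReal_le_ofReal (min_le_left _ _))), ?_⟩
  calc ∑' n, pDiam h2 (U n) ^ s ≤ ∑' n, pDiam h1 (U n) ^ s :=
        ENNReal.tsum_le_tsum fun n => ENNReal.rpow_le_rpow (hd' n) hs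
    _ < ENNReal.ofReal (min ε 1) := hsum
    _ ≤ ENNReal.ofReal ε := ENNReal.ofReal_le_ofReal (min_le_left _ _)

lemma pNull_scale' {h1 h2 s : ℝ} (h1p : 0 < h1) (h12 : h1 ≤ h2) (hs : 0 ≤ s)
    {A : Set (ℝ × ℝ)} (hn : pNull h2 s A) : pNull h1 (s * (h2 / h1)) A := by
  have h2p : 0 < h2 := lt_of_lt_of_le h1p h12
  intro ε εpos
  set ε1 := min ε 1 with hε1
  have ε1pos : 0 < ε1 := lt_min εpos one_pos
  have ε1le : ε1 ≤ 1 := min_le_right _ _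
  set ε2 := min (ε1 ^ (h2 / h1)) ε1 with hε2
  have ε2pos : 0 < ε2 := lt_min (Real.rpow_pos_of_pos ε1pos _) ε1pos
  obtain ⟨U, hcov, hdiam, hsum⟩ := hn ε2 ε2pos
  have hd1 : ∀ n, pDiam h2 (U n) ≤ 1 := fun n => le_trans (hdiam n) (by
    rw [← ENNReal.ofReal_one]
    exact ENNReal.ofReal_le_ofReal (le_trans (min_le_right _ _) ε1le))
  have hkey : ∀ n, pDiam h1 (U n) ≤ (pDiam h2 (U n)) ^ (h1 / h2) := fun n =>
    pDiam_rpow' h1p h12 (hd1 n)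
  refine ⟨U, hcov, ?_, ?_⟩
  · intro n
    have hstep : (pDiam h2 (U n)) ^ (h1 / h2) ≤ (ENNReal.ofReal ε2) ^ (h1 / h2) :=
      ENNReal.rpow_le_rpow (hdiam n) (by positivity)
    have hε2' : (ENNReal.ofReal ε2) ^ (h1 / h2) ≤ ENNReal.ofReal ε1 := by
      have hr : ε2 ^ (h1 / h2) ≤ ε1 := by
        have hm : ε2 ≤ ε1 ^ (h2 / h1) := min_le_left _ _
        calc ε2 ^ (h1 / h2) ≤ (ε1 ^ (h2 / h1)) ^ (h1 / h2) :=
              Real.rpow_le_rpow (le_of_lt ε2pos) hm (by positivity)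
          _ = ε1 ^ ((h2 / h1) * (h1 / h2)) := (Real.rpow_mul ε1pos.le _ _).symm
          _ = ε1 := by
              rw [div_mul_div_comm, mul_comm h2 h1, div_self (by positivity), Real.rpow_one]
      calc (ENNReal.ofReal ε2) ^ (h1 / h2) = ENNReal.ofReal (ε2 ^ (h1 / h2)) :=
            ENNReal.ofReal_rpow_of_nonneg ε2pos.le (by positivity)
        _ ≤ ENNReal.ofReal ε1 := ENNReal.ofReal_le_ofReal hr
    exact le_trans (hkey n) (le_trans hstep (le_trans hε2'
      (ENNReal.ofReal_le_ofReal (min_le_left _ _))))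
  · have hexp : ∀ n, (pDiam h1 (U n)) ^ (s * (h2 / h1)) ≤ (pDiam h2 (U n)) ^ s := by
      intro n
      have hs' : (0:ℝ) ≤ s * (h2 / h1) := mul_nonneg hs (by positivity)
      calc (pDiam h1 (U n)) ^ (s * (h2 / h1))
          ≤ ((pDiam h2 (U n)) ^ (h1 / h2)) ^ (s * (h2 / h1)) :=
            ENNReal.rpow_le_rpow (hkey n) hs'
        _ = (pDiam h2 (U n)) ^ ((h1 / h2) * (s * (h2 / h1))) := by
            rw [← ENNReal.rpow_mul]
        _ = (pDiam h2 (U n)) ^ s := by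
            congr 1
            field_simp
    calc ∑' n, (pDiam h1 (U n)) ^ (s * (h2 / h1)) ≤ ∑' n, (pDiam h2 (U n)) ^ s :=
          ENNReal.tsum_le_tsum hexp
      _ < ENNReal.ofReal ε2 := hsum
      _ ≤ ENNReal.ofReal ε :=
          ENNReal.ofReal_le_ofReal (le_trans (min_le_right _ _) (min_le_left _ _))


/-- If `H : ℝ → (0,1]` is continuous, then `t ↦ dimH(A; ϱ_{H(t)})` is continuous on `ℝ`. -/
theorem stmt_4 (A : Set (ℝ × ℝ)) (H : ℝ → ℝ) (hH : Continuous H)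
    (hrange : ∀ t, 0 < H t ∧ H t ≤ 1) :
    Continuous (fun t => pDimH (H t) A) := by
  set N : ℝ → Set ℝ := fun h => {s : ℝ | 0 ≤ s ∧ pNull h s A} with hNdef
  have hdim : ∀ h, pDimH h A = sInf (N h) := fun h => rfl
  have hbdd : ∀ h, BddBelow (N h) := fun h => ⟨0, fun s hs => hs.1⟩
  by_cases hA : ∃ h : ℝ, 0 < h ∧ (N h).Nonempty
  · -- every null set is nonempty
    obtain ⟨h0, h0p, s0, hs0⟩ := hA
    have hne : ∀ h : ℝ, 0 < h → (N h).Nonempty := by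
      intro h hp
      rcases le_total h0 h with hle | hle
      · exact ⟨s0, hs0.1, pNull_mono' h0p hle hs0.1 hs0.2⟩
      · exact ⟨s0 * (h0 / h), mul_nonneg hs0.1 (by positivity),
          pNull_scale' hp hle hs0.1 hs0.2⟩
    have hd0 : ∀ h : ℝ, 0 < h → 0 ≤ sInf (N h) := fun h hp =>
      le_csInf (hne h hp) fun s hs => hs.1
    have hanti : ∀ h1 h2 : ℝ, 0 < h1 → h1 ≤ h2 → sInf (N h2) ≤ sInf (N h1) := by
      intro h1 h2 h1p h12
      exact csInf_le_csInf (hbdd h2) (hne h1 h1p)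
        (fun s hs => ⟨hs.1, pNull_mono' h1p h12 hs.1 hs.2⟩)
    have hscale : ∀ h1 h2 : ℝ, 0 < h1 → h1 ≤ h2 →
        h1 * sInf (N h1) ≤ h2 * sInf (N h2) := by
      intro h1 h2 h1p h12
      have h2p : 0 < h2 := lt_of_lt_of_le h1p h12
      have key : h1 * sInf (N h1) / h2 ≤ sInf (N h2) := by
        apply le_csInf (hne h2 h2p)
        intro s hs
        have hmem : s * (h2 / h1) ∈ N h1 :=
          ⟨mul_nonneg hs.1 (by positivity), pNull_scale' h1p h12 hs.1 hs.2⟩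
        have hle := csInf_le (hbdd h1) hmem
        rw [div_le_iff₀ h2p]
        calc h1 * sInf (N h1) ≤ h1 * (s * (h2 / h1)) :=
              mul_le_mul_of_nonneg_left hle h1p.le
          _ = s * h2 := by field_simp
      calc h1 * sInf (N h1) = (h1 * sInf (N h1) / h2) * h2 := by field_simp
        _ ≤ sInf (N h2) * h2 := mul_le_mul_of_nonneg_right key h2p.le
        _ = h2 * sInf (N h2) := mul_comm _ _
    rw [continuous_iff_continuousAt]
    intro t₀
    set h₀ := H t₀ with hh₀
    obtain ⟨h₀p, h₀1⟩ := hrange t₀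
    set C := sInf (N (h₀ / 2)) with hC
    have hC0 : 0 ≤ C := hd0 _ (by linarith)
    have hest : ∀ h : ℝ, h₀ / 2 ≤ h →
        h₀ * |sInf (N h) - sInf (N h₀)| ≤ 2 * C * |h - h₀| := by
      intro h hh
      have hp : 0 < h := lt_of_lt_of_le (by linarith) hh
      rcases le_total h h₀ with hc | hc
      · have h1 : sInf (N h₀) ≤ sInf (N h) := hanti h h₀ hp hc
        have h2 : h * sInf (N h) ≤ h₀ * sInf (N h₀) := hscale h h₀ hp hc
        have h3 : sInf (N h₀) ≤ C := hanti (h₀ / 2) h₀ (by linarith) (by linarith)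
        have h4 : 0 ≤ sInf (N h₀) := hd0 _ h₀p
        rw [abs_of_nonneg (by linarith), abs_of_nonpos (by linarith)]
        nlinarith [mul_nonneg (by linarith : (0:ℝ) ≤ 2 * h - h₀)
            (by linarith : (0:ℝ) ≤ sInf (N h) - sInf (N h₀)),
          mul_nonneg (by linarith : (0:ℝ) ≤ h₀ - h) (by linarith : (0:ℝ) ≤ C - sInf (N h₀))]
      · have h1 : sInf (N h) ≤ sInf (N h₀) := hanti h₀ h h₀p hc
        have h2 : h₀ * sInf (N h₀) ≤ h * sInf (N h) := hscale h₀ h h₀p hc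
        have h3 : sInf (N h) ≤ C := hanti (h₀ / 2) h (by linarith) hh
        have h4 : 0 ≤ sInf (N h) := hd0 _ hp
        rw [abs_of_nonpos (by linarith), abs_of_nonneg (by linarith)]
        nlinarith [mul_nonneg (by linarith : (0:ℝ) ≤ h - h₀)
            (by linarith : (0:ℝ) ≤ C - sInf (N h))]
    rw [Metric.continuousAt_iff]
    intro ε εpos
    have δ'pos : 0 < min (h₀ / 2) (ε * h₀ / (2 * C + 1)) :=
      lt_min (by linarith) (by positivity)
    obtain ⟨δ, δpos, hδ⟩ := Metric.continuousAt_iff.mp hH.continuousAt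
      (min (h₀ / 2) (ε * h₀ / (2 * C + 1))) δ'pos
    refine ⟨δ, δpos, fun {t} ht => ?_⟩
    have hHt := hδ ht
    rw [Real.dist_eq] at hHt
    have habs1 : |H t - h₀| < h₀ / 2 := lt_of_lt_of_le hHt (min_le_left _ _)
    have habs2 : |H t - h₀| < ε * h₀ / (2 * C + 1) := lt_of_lt_of_le hHt (min_le_right _ _)
    have hge : h₀ / 2 ≤ H t := by
      have := abs_lt.mp habs1
      linarith [this.1]
    have hkey := hest (H t) hge
    rw [Real.dist_eq, hdim, hdim]
    have hfin : 2 * C * |H t - h₀| < ε * h₀ := by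
      have hb : 2 * C * |H t - h₀| ≤ 2 * C * (ε * h₀ / (2 * C + 1)) :=
        mul_le_mul_of_nonneg_left habs2.le (by linarith)
      have hc : 2 * C * (ε * h₀ / (2 * C + 1)) < ε * h₀ := by
        rw [mul_div_assoc']
        rw [div_lt_iff₀ (by linarith)]
        nlinarith
      linarith
    have := lt_of_le_of_lt hkey hfin
    nlinarith [abs_nonneg (sInf (N (H t)) - sInf (N h₀))]
  · -- all null sets empty: dimension is constantly sInf ∅ = 0
    push_neg at hA
    have hemp : ∀ h : ℝ, 0 < h → N h = ∅ := hA
    have : (fun t => pDimH (H t) A) = fun _ => (0 : ℝ) := by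
      funext t
      rw [hdim, hemp (H t) (hrange t).1, Real.sInf_empty]
    rw [this]
    exact continuous_const
end

section
/- Let α ∈ (0,1), k ∈ ℕ, and z ∈ ℂ with Re(z) > 0. Then the integral ∫_0^∞ u^{α−1} (log u)^k e^{−zu} du is absolutely convergent and equals z^{−α} ∑_{j=0}^{k} (−1)^j (log z)^j binom(k,j) F(α, k−j), where z^{−α} and log z are the principal branches and F(α, m) := ∫_0^∞ v^{α−1} (log v)^m e^{−v} dv (which is absolutely convergent for every m ∈ ℕ). -/
/-! The integral is the Mellin transform at `s = α` of `t ↦ (log t) ^ k * exp (-z t)`, and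
multiplying a function by `log t` differentiates its Mellin transform in `s`. So the integral is
the `k`-th `s`-derivative of `∫ t ^ (s - 1) exp (-z t) dt = z ^ (-s) Γ(s)`. This identity holds
for real `z > 0` by rescaling the Gamma integral and extends to `Re z > 0` by analytic
continuation in `z`. Leibniz' rule then gives the formula, because `z ^ (-s) = exp (-s log z)`
and the `m`-th derivative of `Γ` at `α` is `F(α, m)`. -/

open Filter MeasureTheory Set Topology
open scoped ENNReal NNReal

/-- `F(α, m) = ∫_0^∞ v^{α−1} (log v)^m e^{−v} dv`, a logarithmic variant of the Gamma
function. -/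
noncomputable def gammaLog (α : ℝ) (m : ℕ) : ℝ :=
  ∫ v in Set.Ioi (0 : ℝ), v ^ (α - 1) * Real.log v ^ m * Real.exp (-v)

open Complex Asymptotics

lemma isOpen_re_pos : IsOpen {s : ℂ | 0 < s.re} := isOpen_lt continuous_const continuous_re

lemma tendsto_ofReal_nhdsNE (x : ℝ) : Tendsto ((↑) : ℝ → ℂ) (𝓝[≠] x) (𝓝[≠] (x : ℂ)) :=
  tendsto_nhdsWithin_of_tendsto_nhds_of_eventually_within _
    (continuous_ofReal.continuousAt.mono_left nhdsWithin_le_nhds)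
    (eventually_nhdsWithin_of_forall fun _ hy => ofReal_injective.ne hy)

lemma ofReal_mul_cexp_neg_one_mul (a t : ℝ) :
    (a : ℂ) * cexp (-1 * t) = ((a * Real.exp (-t) : ℝ) : ℂ) := by
  rw [ofReal_mul, ofReal_exp, ofReal_neg, neg_one_mul]

noncomputable def logPowMulExp (z : ℂ) (k : ℕ) (t : ℝ) : ℂ :=
  (Real.log t ^ k : ℝ) • cexp (-z * t)

section LogPowMulExp

variable {z : ℂ}

lemma log_smul_logPowMulExp (z : ℂ) (k : ℕ) :
    (fun t : ℝ => Real.log t • logPowMulExp z k t) = logPowMulExp z (k + 1) := by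
  ext t
  simp only [logPowMulExp, smul_smul, pow_succ, mul_comm]

lemma continuousOn_logPowMulExp (z : ℂ) (k : ℕ) : ContinuousOn (logPowMulExp z k) (Ioi 0) :=
  ((Real.continuousOn_log.mono fun _ ht => ne_of_gt ht).pow k).smul
    (by fun_prop : Continuous fun t : ℝ => cexp (-z * t)).continuousOn

lemma norm_logPowMulExp (z : ℂ) (k : ℕ) (t : ℝ) :
    ‖logPowMulExp z k t‖ = |Real.log t| ^ k * Real.exp (-z.re * t) := by
  simp [logPowMulExp, Complex.norm_exp]

lemma logPowMulExp_isBigO_atTop (hz : 0 < z.re) (k : ℕ) (a : ℝ) :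
    logPowMulExp z k =O[atTop] (· ^ (-a)) := by
  induction k generalizing a with
  | zero =>
    refine IsBigO.trans (IsBigO.of_bound 1 (.of_forall fun t => ?_))
      (isLittleO_exp_neg_mul_rpow_atTop hz (-a)).isBigO
    simp [norm_logPowMulExp]
  | succ k ih =>
    rw [← log_smul_logPowMulExp]
    exact isBigO_rpow_top_log_smul (lt_add_one a) (ih (a + 1))

lemma logPowMulExp_isBigO_nhdsGT_zero (hz : 0 < z.re) (k : ℕ) {b : ℝ} (hb : 0 < b) :
    logPowMulExp z k =O[𝓝[>] 0] (· ^ (-b)) := by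
  induction k generalizing b with
  | zero =>
    refine IsBigO.of_bound 1 ?_
    filter_upwards [Ioo_mem_nhdsGT (zero_lt_one' ℝ)] with t ⟨ht0, ht1⟩
    rw [norm_logPowMulExp, pow_zero, one_mul, one_mul, Real.norm_of_nonneg (by positivity)]
    calc Real.exp (-z.re * t) ≤ 1 := Real.exp_le_one_iff.mpr (by nlinarith)
      _ ≤ t ^ (-b) := Real.one_le_rpow_of_pos_of_le_one_of_nonpos ht0 ht1.le (by linarith)
  | succ k ih =>
    rw [← log_smul_logPowMulExp]
    exact isBigO_rpow_zero_log_smul (half_lt_self hb) (ih (half_pos hb))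

lemma mellinConvergent_logPowMulExp (hz : 0 < z.re) (k : ℕ) {s : ℂ} (hs : 0 < s.re) :
    MellinConvergent (logPowMulExp z k) s :=
  mellinConvergent_of_isBigO_rpow
    ((continuousOn_logPowMulExp z k).locallyIntegrableOn measurableSet_Ioi)
    (logPowMulExp_isBigO_atTop hz k _) (lt_add_one _)
    (logPowMulExp_isBigO_nhdsGT_zero hz k (half_pos hs)) (half_lt_self hs)

lemma hasDerivAt_mellin_logPowMulExp (hz : 0 < z.re) (k : ℕ) {s : ℂ} (hs : 0 < s.re) :
    HasDerivAt (mellin (logPowMulExp z k)) (mellin (logPowMulExp z (k + 1)) s) s := by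
  rw [← log_smul_logPowMulExp]
  exact (mellin_hasDerivAt_of_isBigO_rpow
    ((continuousOn_logPowMulExp z k).locallyIntegrableOn measurableSet_Ioi)
    (logPowMulExp_isBigO_atTop hz k _) (lt_add_one _)
    (logPowMulExp_isBigO_nhdsGT_zero hz k (half_pos hs)) (half_lt_self hs)).2

lemma iteratedDeriv_mellin_logPowMulExp (hz : 0 < z.re) (k : ℕ) {s : ℂ} (hs : 0 < s.re) :
    iteratedDeriv k (mellin (logPowMulExp z 0)) s = mellin (logPowMulExp z k) s := by
  induction k generalizing s with
  | zero => rfl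
  | succ k ih =>
    have hnear : iteratedDeriv k (mellin (logPowMulExp z 0)) =ᶠ[𝓝 s] mellin (logPowMulExp z k) :=
      Filter.eventually_of_mem (isOpen_re_pos.mem_nhds hs) fun _ h => ih h
    rw [iteratedDeriv_succ, hnear.deriv_eq, (hasDerivAt_mellin_logPowMulExp hz k hs).deriv]

lemma mellin_logPowMulExp_zero_eq (z s : ℂ) :
    mellin (logPowMulExp z 0) s = ∫ t in Ioi (0 : ℝ), (t : ℂ) ^ (s - 1) * cexp (-z * t) := by
  simp [mellin, logPowMulExp]

lemma norm_cexp_neg_mul_ofReal_le {w : ℂ} {ε t : ℝ} (ht : 0 ≤ t) (hε : ε ≤ w.re) :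
    ‖cexp (-w * t)‖ ≤ ‖cexp (-ε * t)‖ := by
  simp only [Complex.norm_exp, Real.exp_le_exp, neg_mul, neg_re, mul_re, ofReal_re, ofReal_im,
    mul_zero, sub_zero]
  nlinarith

lemma differentiableOn_mellin_logPowMulExp_zero {s : ℂ} (hs : 0 < s.re) :
    DifferentiableOn ℂ (fun w => mellin (logPowMulExp w 0) s) {w | 0 < w.re} := by
  intro w₀ hw₀
  have hε : 0 < w₀.re / 2 := half_pos hw₀
  let F : ℂ → ℝ → ℂ := fun w t => (t : ℂ) ^ (s - 1) * cexp (-w * t)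
  let F' : ℂ → ℝ → ℂ := fun w t => (t : ℂ) ^ (s - 1) * (-t * cexp (-w * t))
  have hF_int : ∀ w : ℂ, 0 < w.re → IntegrableOn (F w) (Ioi 0) := fun w hw =>
    (mellinConvergent_logPowMulExp hw 0 hs).congr_fun (fun t _ => by simp [F, logPowMulExp])
      measurableSet_Ioi
  have hF'_meas : AEStronglyMeasurable (F' w₀) (volume.restrict (Ioi 0)) := by
    refine ContinuousOn.aestronglyMeasurable (ContinuousOn.mul ?_ (by fun_prop)) measurableSet_Ioi
    exact fun t ht => (continuousAt_ofReal_cpow_const _ _ (Or.inr (ne_of_gt ht))).continuousWithinAt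
  have hF'_le : ∀ᵐ t ∂volume.restrict (Ioi 0),
      ∀ w ∈ Metric.ball w₀ (w₀.re / 2), ‖F' w t‖ ≤ ‖F' ↑(w₀.re / 2) t‖ := by
    refine (ae_restrict_mem measurableSet_Ioi).mono fun t (ht : 0 < t) w hw => ?_
    have hεw : w₀.re / 2 ≤ w.re := by
      have := (abs_le.mp ((abs_re_le_norm (w - w₀)).trans (mem_ball_iff_norm.mp hw).le)).1
      rw [sub_re] at this
      linarith
    simp only [F', norm_mul]
    gcongr
    exact norm_cexp_neg_mul_ofReal_le ht.le hεw
  have hF'_int : IntegrableOn (fun t => ‖F' ↑(w₀.re / 2) t‖) (Ioi 0) := by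
    refine IntegrableOn.congr_fun (mellinConvergent_logPowMulExp (z := ↑(w₀.re / 2))
      (by rwa [ofReal_re]) 0 (s := s + 1) (by rw [add_re, one_re]; linarith)).norm (fun t (ht : 0 < t) => ?_)
      measurableSet_Ioi
    have ht0 : (t : ℂ) ≠ 0 := ofReal_ne_zero.mpr ht.ne'
    simp only [F', logPowMulExp, pow_zero, one_smul, smul_eq_mul, add_sub_cancel_right,
      cpow_sub _ _ ht0, cpow_one, norm_mul, norm_div, norm_neg]
    field_simp
  have hF_deriv : ∀ t : ℝ, ∀ w : ℂ, HasDerivAt (fun w => F w t) (F' w t) w := fun t w => by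
    refine ((((hasDerivAt_id w).neg.mul_const (t : ℂ)).cexp).const_mul _).congr_deriv ?_
    simp only [F', Pi.neg_apply, id]
    ring
  have key := hasDerivAt_integral_of_dominated_loc_of_deriv_le (Metric.ball_mem_nhds w₀ hε)
    (Filter.eventually_of_mem (isOpen_re_pos.mem_nhds hw₀)
      fun w hw => (hF_int w hw).aestronglyMeasurable)
    (hF_int w₀ hw₀) hF'_meas hF'_le hF'_int (.of_forall fun t w _ => hF_deriv t w)
  simp only [mellin_logPowMulExp_zero_eq]
  exact key.2.differentiableAt.differentiableWithinAt

lemma mellin_logPowMulExp_zero_ofReal {r : ℝ} (hr : 0 < r) {s : ℂ} (hs : 0 < s.re) :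
    mellin (logPowMulExp r 0) s = (r : ℂ) ^ (-s) * Gamma s := by
  rw [mellin_logPowMulExp_zero_eq, cpow_neg, ← inv_cpow _ _ (by simp [arg_ofReal_of_nonneg hr.le,
    Real.pi_ne_zero.symm]), inv_eq_one_div, ← integral_cpow_mul_exp_neg_mul_Ioi hs hr]
  simp only [neg_mul]

lemma mellin_logPowMulExp_zero (hz : 0 < z.re) {s : ℂ} (hs : 0 < s.re) :
    mellin (logPowMulExp z 0) s = z ^ (-s) * Gamma s := by
  have hU : IsPreconnected {w : ℂ | 0 < w.re} := (convex_halfSpace_re_gt 0).isPreconnected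
  have hI : AnalyticOnNhd ℂ (fun w => mellin (logPowMulExp w 0) s) {w | 0 < w.re} :=
    (differentiableOn_mellin_logPowMulExp_zero hs).analyticOnNhd isOpen_re_pos
  have hJ : AnalyticOnNhd ℂ (fun w : ℂ => w ^ (-s) * Gamma s) {w | 0 < w.re} :=
    DifferentiableOn.analyticOnNhd (fun w hw =>
      (((hasDerivAt_id w).cpow_const (Or.inl hw)).differentiableAt.mul_const _)
        |>.differentiableWithinAt) isOpen_re_pos
  have hreal : ∀ᶠ r : ℝ in 𝓝[≠] 1, mellin (logPowMulExp r 0) s = (r : ℂ) ^ (-s) * Gamma s :=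
    (eventually_nhdsWithin_of_eventually_nhds (lt_mem_nhds one_pos)).mono
      fun r hr => mellin_logPowMulExp_zero_ofReal hr hs
  have hfreq : ∃ᶠ w in 𝓝[≠] (1 : ℂ), mellin (logPowMulExp w 0) s = w ^ (-s) * Gamma s := by
    simpa using (tendsto_ofReal_nhdsNE 1).frequently hreal.frequently
  exact hI.eqOn_of_preconnected_of_frequently_eq hJ hU (by simp) hfreq hz

lemma contDiffAt_mellin_logPowMulExp (hz : 0 < z.re) (k : ℕ) {n : WithTop ℕ∞} {s : ℂ}
    (hs : 0 < s.re) : ContDiffAt ℂ n (mellin (logPowMulExp z k)) s :=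
  (DifferentiableOn.contDiffOn (fun _ hw =>
      (hasDerivAt_mellin_logPowMulExp hz k hw).differentiableAt.differentiableWithinAt)
    isOpen_re_pos).contDiffAt (isOpen_re_pos.mem_nhds hs)

lemma mellin_logPowMulExp (hz : 0 < z.re) (k : ℕ) {s : ℂ} (hs : 0 < s.re) :
    mellin (logPowMulExp z k) s = z ^ (-s) * ∑ j ∈ Finset.range (k + 1),
      (-log z) ^ j * k.choose j * mellin (logPowMulExp 1 (k - j)) s := by
  have h1 : (0 : ℝ) < (1 : ℂ).re := by simp
  have hz0 : z ≠ 0 := fun h => by simp [h] at hz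
  have hcpow (w : ℂ) : cexp (-log z * w) = z ^ (-w) := by
    rw [cpow_def_of_ne_zero hz0, neg_mul, mul_neg]
  have hnear : mellin (logPowMulExp z 0) =ᶠ[𝓝 s]
      (fun s => cexp (-log z * s)) * mellin (logPowMulExp 1 0) := by
    filter_upwards [isOpen_re_pos.mem_nhds hs] with w hw
    rw [Pi.mul_apply, hcpow, mellin_logPowMulExp_zero hz hw,
      mellin_logPowMulExp_zero h1 hw, one_cpow, one_mul]
  rw [← iteratedDeriv_mellin_logPowMulExp hz k hs, hnear.iteratedDeriv_eq,
    iteratedDeriv_mul (by fun_prop) (contDiffAt_mellin_logPowMulExp h1 0 hs),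
    Finset.mul_sum]
  refine Finset.sum_congr rfl fun j _ => ?_
  rw [iteratedDeriv_cexp_const_mul, iteratedDeriv_mellin_logPowMulExp h1 _ hs]
  beta_reduce
  rw [hcpow]
  ring

lemma cpow_smul_logPowMulExp (α : ℝ) (z : ℂ) (k : ℕ) {t : ℝ} (ht : 0 < t) :
    (t : ℂ) ^ ((α : ℂ) - 1) • logPowMulExp z k t
      = ((t ^ (α - 1) * Real.log t ^ k : ℝ) : ℂ) * cexp (-z * t) := by
  rw [show (α : ℂ) - 1 = ((α - 1 : ℝ) : ℂ) by push_cast; ring, ← ofReal_cpow ht.le]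
  simp only [logPowMulExp, real_smul, smul_eq_mul, ofReal_mul, ofReal_pow]
  ring

lemma mellin_logPowMulExp_ofReal (α : ℝ) (z : ℂ) (k : ℕ) :
    mellin (logPowMulExp z k) α
      = ∫ t in Ioi (0 : ℝ), ((t ^ (α - 1) * Real.log t ^ k : ℝ) : ℂ) * cexp (-z * t) :=
  setIntegral_congr_fun measurableSet_Ioi fun _ ht => cpow_smul_logPowMulExp α z k ht

lemma integrableOn_of_mellinConvergent_logPowMulExp {α : ℝ} {k : ℕ}
    (h : MellinConvergent (logPowMulExp z k) α) :
    IntegrableOn (fun t : ℝ => ((t ^ (α - 1) * Real.log t ^ k : ℝ) : ℂ) * cexp (-z * t))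
      (Ioi 0) :=
  h.congr_fun (fun _ ht => cpow_smul_logPowMulExp α z k ht) measurableSet_Ioi

lemma integrableOn_gammaLog_integrand {α : ℝ} (hα : 0 < α) (m : ℕ) :
    IntegrableOn (fun v : ℝ => v ^ (α - 1) * Real.log v ^ m * Real.exp (-v)) (Ioi 0) := by
  have h := integrableOn_of_mellinConvergent_logPowMulExp
    (mellinConvergent_logPowMulExp (z := 1) (by simp) m (s := α) (by simpa using hα))
  simp only [ofReal_mul_cexp_neg_one_mul] at h
  exact h.re.congr (.of_forall fun t => by simp only [RCLike.re_to_complex, ofReal_re])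

lemma mellin_logPowMulExp_one_ofReal (α : ℝ) (m : ℕ) :
    mellin (logPowMulExp 1 m) α = gammaLog α m := by
  simp only [mellin_logPowMulExp_ofReal, ofReal_mul_cexp_neg_one_mul]
  exact integral_ofReal

end LogPowMulExp

theorem stmt_8_general (α : ℝ) (hα0 : 0 < α) (k : ℕ) (z : ℂ) (hz : 0 < z.re) :
    (∀ m : ℕ, IntegrableOn
      (fun v : ℝ => v ^ (α - 1) * Real.log v ^ m * Real.exp (-v)) (Set.Ioi 0)) ∧
    IntegrableOn
      (fun u : ℝ => ((u ^ (α - 1) * Real.log u ^ k : ℝ) : ℂ) * Complex.exp (-z * u))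
      (Set.Ioi 0) ∧
    (∫ u in Set.Ioi (0 : ℝ), ((u ^ (α - 1) * Real.log u ^ k : ℝ) : ℂ) * Complex.exp (-z * u))
      = z ^ (-(α : ℂ)) * ∑ j ∈ Finset.range (k + 1),
          (-1 : ℂ) ^ j * Complex.log z ^ j * (Nat.choose k j : ℂ) * (gammaLog α (k - j) : ℂ) := by
  have hα : 0 < (α : ℂ).re := by simpa using hα0
  refine ⟨integrableOn_gammaLog_integrand hα0,
    integrableOn_of_mellinConvergent_logPowMulExp (mellinConvergent_logPowMulExp hz k hα), ?_⟩
  rw [← mellin_logPowMulExp_ofReal, mellin_logPowMulExp hz k hα]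
  congr 1
  refine Finset.sum_congr rfl fun j _ => ?_
  rw [mellin_logPowMulExp_one_ofReal, neg_pow]

/-- For `α ∈ (0,1)`, `k ∈ ℕ` and `z ∈ ℂ` with `Re z > 0`, the integral
`∫_0^∞ u^{α−1} (log u)^k e^{−zu} du` is absolutely convergent and equals
`z^{−α} ∑_{j=0}^k (−1)^j (log z)^j C(k,j) F(α, k−j)` (principal branches), where each
`F(α, m)` is given by an absolutely convergent integral. -/
theorem stmt_8 (α : ℝ) (hα0 : 0 < α) (hα1 : α < 1) (k : ℕ) (z : ℂ) (hz : 0 < z.re) :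
    (∀ m : ℕ, IntegrableOn
      (fun v : ℝ => v ^ (α - 1) * Real.log v ^ m * Real.exp (-v)) (Set.Ioi 0)) ∧
    IntegrableOn
      (fun u : ℝ => ((u ^ (α - 1) * Real.log u ^ k : ℝ) : ℂ) * Complex.exp (-z * u))
      (Set.Ioi 0) ∧
    (∫ u in Set.Ioi (0 : ℝ), ((u ^ (α - 1) * Real.log u ^ k : ℝ) : ℂ) * Complex.exp (-z * u))
      = z ^ (-(α : ℂ)) * ∑ j ∈ Finset.range (k + 1),
          (-1 : ℂ) ^ j * Complex.log z ^ j * (Nat.choose k j : ℂ) * (gammaLog α (k - j) : ℂ) :=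
  stmt_8_general α hα0 k z hz
end

section
/- Let (Ω, 𝓕, P) be a probability space and (X_s)_{s∈ℝ} a family of real-valued square-integrable random variables. Let t ∈ ℝ, H > 0, C > 0, and suppose there is a sequence (s_i) with s_i ≠ t, s_i → t, and E[(X_t − X_{s_i})²] ≤ C|t − s_i|^{2H} for all i. Then for every n ≥ 1, every ε ∈ (0, 2H), every c > 0 and every r > 0, there exist points t_1, …, t_n ∈ B(t,r) \ {t} such that E[(X_t − E[X_t | σ(X_{t_1}, …, X_{t_n})])²] ≤ c · min_{1≤k≤n} |t − t_k|^{2H−ε}. (Consequently, the local nondeterminism lower bound Var(X_t | X_{t_1}, …, X_{t_n}) ≥ c_n min_k |t − t_k|^{2H−ε} fails for every exponent 2H − ε < 2H.) -/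
/-!
Conditioning on `X_u` is at least as good as predicting `X_t` by `X_u` itself, since the
conditional expectation is the orthogonal projection onto the `σ(X_u)`-measurable part of `L²`.
Taking all `t_k` equal to a point `u = s_i` close enough to `t` that `C|t - u|^ε ≤ c` gives
`E[(X_t − E[X_t | X_u])²] ≤ E[(X_t − X_u)²] ≤ C|t − u|^{2H} ≤ c|t − u|^{2H−ε}`.
-/

open Filter MeasureTheory Set Topology

namespace MeasureTheory

variable {Ω : Type*} {m mΩ : MeasurableSpace Ω} {P : Measure Ω}

lemma Lp.integral_sq_eq_norm_sq (g : Lp ℝ 2 P) : ∫ ω, g ω ^ 2 ∂P = ‖g‖ ^ 2 := by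
  rw [← real_inner_self_eq_norm_sq, L2.inner_def]
  simp [sq]

lemma Lp.integral_sq_sub_eq_norm_sq_of_ae_eq {f g : Ω → ℝ} {F G : Lp ℝ 2 P}
    (hF : F =ᵐ[P] f) (hG : G =ᵐ[P] g) : ∫ ω, (f ω - g ω) ^ 2 ∂P = ‖F - G‖ ^ 2 := by
  rw [← Lp.integral_sq_eq_norm_sq]
  refine integral_congr_ae ?_
  filter_upwards [hF, hG, Lp.coeFn_sub F G] with ω hFω hGω hsub
  rw [hsub, Pi.sub_apply, hFω, hGω]

lemma norm_sub_condExpL2_le (hm : m ≤ mΩ) (F : Lp ℝ 2 P) (G : lpMeas ℝ ℝ m 2 P) :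
    ‖F - condExpL2 ℝ ℝ hm F‖ ≤ ‖F - G‖ := by
  have : Fact (m ≤ mΩ) := ⟨hm⟩
  rw [condExpL2, ← Submodule.starProjection_apply, Submodule.starProjection_minimal]
  exact ciInf_le ⟨0, forall_mem_range.mpr fun _ => norm_nonneg _⟩ G

theorem integral_sq_sub_condExp_le [IsFiniteMeasure P] (hm : m ≤ mΩ) {f g : Ω → ℝ}
    (hf : MemLp f 2 P) (hg : MemLp g 2 P) (hgm : AEStronglyMeasurable[m] g P) :
    ∫ ω, (f ω - P[f | m] ω) ^ 2 ∂P ≤ ∫ ω, (f ω - g ω) ^ 2 ∂P := by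
  have hG : hg.toLp g ∈ lpMeas ℝ ℝ m 2 P :=
    mem_lpMeas_iff_aestronglyMeasurable.mpr (hgm.congr hg.coeFn_toLp.symm)
  rw [Lp.integral_sq_sub_eq_norm_sq_of_ae_eq hf.coeFn_toLp
      (hf.condExpL2_ae_eq_condExp (𝕜 := ℝ) hm),
    Lp.integral_sq_sub_eq_norm_sq_of_ae_eq hf.coeFn_toLp hg.coeFn_toLp]
  exact pow_le_pow_left₀ (norm_nonneg _) (norm_sub_condExpL2_le hm _ ⟨_, hG⟩) 2

end MeasureTheory

lemma Real.mul_rpow_le_mul_rpow_sub {C c d ε a : ℝ} (hd : 0 < d) (h : C * d ^ ε ≤ c) :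
    C * d ^ a ≤ c * d ^ (a - ε) := by
  calc C * d ^ a = C * d ^ ε * d ^ (a - ε) := by
        rw [mul_assoc, ← Real.rpow_add hd, add_sub_cancel]
    _ ≤ c * d ^ (a - ε) := mul_le_mul_of_nonneg_right h (Real.rpow_nonneg hd.le _)

lemma Filter.Tendsto.eventually_mul_abs_sub_rpow_lt {ι : Type*} {l : Filter ι} {s : ι → ℝ}
    {t C ε c : ℝ} (hs : Tendsto s l (𝓝 t)) (hε : 0 < ε) (hc : 0 < c) :
    ∀ᶠ i in l, C * |t - s i| ^ ε < c := by
  have hlim : Tendsto (fun i => C * |t - s i| ^ ε) l (𝓝 (C * |t - t| ^ ε)) :=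
    ((tendsto_const_nhds.sub hs).abs.rpow_const (Or.inr hε.le)).const_mul C
  rw [sub_self, abs_zero, Real.zero_rpow hε.ne', mul_zero] at hlim
  exact hlim.eventually_lt_const hc

theorem stmt_12_general {Ω : Type*} [MeasurableSpace Ω] (P : MeasureTheory.Measure Ω)
    [IsProbabilityMeasure P] (X : ℝ → Ω → ℝ)
    (hmeas : ∀ s : ℝ, Measurable (X s)) (hL2 : ∀ s : ℝ, MemLp (X s) 2 P)
    (t H C : ℝ)
    (s : ℕ → ℝ) (hne : ∀ i, s i ≠ t) (hlim : Tendsto s atTop (𝓝 t))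
    (hvar : ∀ i, (∫ ω, (X t ω - X (s i) ω) ^ 2 ∂P) ≤ C * |t - s i| ^ (2 * H)) :
    ∀ n : ℕ, 1 ≤ n → ∀ ε : ℝ, 0 < ε → ε < 2 * H → ∀ c > (0 : ℝ), ∀ r > (0 : ℝ),
      ∃ ts : Fin n → ℝ, (∀ k, ts k ∈ Metric.ball t r ∧ ts k ≠ t) ∧
        (∫ ω, (X t ω -
            (P[X t | ⨆ k : Fin n, MeasurableSpace.comap (X (ts k)) inferInstance]) ω) ^ 2 ∂P)
          ≤ c * ⨅ k : Fin n, |t - ts k| ^ (2 * H - ε) := by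
  intro n hn ε hε _ c hc r hr
  obtain ⟨N, hN_ball, hN_small⟩ := ((hlim.eventually (Metric.ball_mem_nhds t hr)).and
    (hlim.eventually_mul_abs_sub_rpow_lt (C := C) hε hc)).exists
  refine ⟨fun _ => s N, fun _ => ⟨hN_ball, hne N⟩, ?_⟩
  have : Nonempty (Fin n) := ⟨⟨0, hn⟩⟩
  have hm_le : (⨆ _ : Fin n, MeasurableSpace.comap (X (s N)) inferInstance) ≤ ‹_› :=
    iSup_le fun _ => (hmeas (s N)).comap_le
  have hXs_meas : Measurable[⨆ _ : Fin n, MeasurableSpace.comap (X (s N)) inferInstance]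
      (X (s N)) :=
    (comap_measurable (X (s N))).mono (le_iSup_of_le ⟨0, hn⟩ le_rfl) le_rfl
  rw [ciInf_const]
  calc _ ≤ ∫ ω, (X t ω - X (s N) ω) ^ 2 ∂P :=
        integral_sq_sub_condExp_le hm_le (hL2 t) (hL2 (s N)) hXs_meas.aestronglyMeasurable
    _ ≤ C * |t - s N| ^ (2 * H) := hvar N
    _ ≤ c * |t - s N| ^ (2 * H - ε) :=
        Real.mul_rpow_le_mul_rpow_sub (abs_pos.mpr (sub_ne_zero.mpr (hne N).symm)) hN_small.le

/-- Failure of local nondeterminism with any exponent `2H − ε < 2H`: if `X` is a family of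
square-integrable random variables and there is a sequence `s_i → t`, `s_i ≠ t`, with
`E[(X_t − X_{s_i})²] ≤ C|t − s_i|^{2H}`, then for every `n ≥ 1`, `ε ∈ (0,2H)`, `c > 0` and
`r > 0` there are points `t_1, …, t_n ∈ B(t,r) \ {t}` with
`E[(X_t − E[X_t | σ(X_{t_1},…,X_{t_n})])²] ≤ c · min_k |t − t_k|^{2H−ε}`. -/
theorem stmt_12 {Ω : Type*} [MeasurableSpace Ω] (P : MeasureTheory.Measure Ω)
    [IsProbabilityMeasure P] (X : ℝ → Ω → ℝ)
    (hmeas : ∀ s : ℝ, Measurable (X s)) (hL2 : ∀ s : ℝ, MemLp (X s) 2 P)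
    (t H C : ℝ) (hH : 0 < H) (hC : 0 < C)
    (s : ℕ → ℝ) (hne : ∀ i, s i ≠ t) (hlim : Tendsto s atTop (𝓝 t))
    (hvar : ∀ i, (∫ ω, (X t ω - X (s i) ω) ^ 2 ∂P) ≤ C * |t - s i| ^ (2 * H)) :
    ∀ n : ℕ, 1 ≤ n → ∀ ε : ℝ, 0 < ε → ε < 2 * H → ∀ c > (0 : ℝ), ∀ r > (0 : ℝ),
      ∃ ts : Fin n → ℝ, (∀ k, ts k ∈ Metric.ball t r ∧ ts k ≠ t) ∧
        (∫ ω, (X t ω -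
            (P[X t | ⨆ k : Fin n, MeasurableSpace.comap (X (ts k)) inferInstance]) ω) ^ 2 ∂P)
          ≤ c * ⨅ k : Fin n, |t - ts k| ^ (2 * H - ε) :=
  stmt_12_general P X hmeas hL2 t H C s hne hlim hvar
end

section
/- Let H ∈ (0,1), t ∈ ℝ, δ > 0, and let B : ℝ → ℝ be continuous and θ-Hölder continuous at t for some θ ∈ (max(0, 1/2 − H), 1], i.e. there is C > 0 with |B(u) − B(t)| ≤ C|u − t|^θ for all u ∈ B(t,δ). Then the symmetric principal value lim_{ε→0⁺} ∫_{ε<|t−u|<δ} B(u) · sgn(t−u) · |t−u|^{H−3/2} du exists and equals ∫_{t−δ}^{t} (B(u) − B(2t−u)) (t−u)^{H−3/2} du, the latter integral being absolutely convergent. -/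
open Filter MeasureTheory Set Topology
open scoped ENNReal NNReal

/-- Let `H ∈ (0,1)`, `δ > 0`, and let `B` be continuous and `θ`-Hölder at `t` for some
`θ ∈ (max(0, 1/2 − H), 1]`. Then the integral `∫_{t−δ}^t (B(u) − B(2t−u)) (t−u)^{H−3/2} du`
is absolutely convergent, and the symmetric principal value
`lim_{ε→0⁺} ∫_{ε<|t−u|<δ} B(u) sgn(t−u) |t−u|^{H−3/2} du` exists and equals it. -/
theorem stmt_19 (H : ℝ) (hH0 : 0 < H) (hH1 : H < 1) (t δ : ℝ) (hδ : 0 < δ)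
    (B : ℝ → ℝ) (hB : Continuous B)
    (θ : ℝ) (hθl : max 0 (1 / 2 - H) < θ) (hθu : θ ≤ 1)
    (C : ℝ) (hC : 0 < C)
    (hHolder : ∀ u ∈ Metric.ball t δ, |B u - B t| ≤ C * |u - t| ^ θ) :
    IntegrableOn (fun u : ℝ => (B u - B (2 * t - u)) * (t - u) ^ (H - 3 / 2))
      (Ioo (t - δ) t) ∧
    Tendsto (fun ε : ℝ =>
        ∫ u in {u : ℝ | ε < |t - u| ∧ |t - u| < δ},
          B u * Real.sign (t - u) * |t - u| ^ (H - 3 / 2))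
      (𝓝[>] (0 : ℝ))
      (𝓝 (∫ u in Ioo (t - δ) t, (B u - B (2 * t - u)) * (t - u) ^ (H - 3 / 2))) := by
  have hθ0 : 0 < θ := lt_of_le_of_lt (le_max_left _ _) hθl
  have hθH : 1 / 2 - H < θ := lt_of_le_of_lt (le_max_right _ _) hθl
  set p : ℝ := H - 3 / 2 with hp
  set q : ℝ := θ + (H - 3 / 2) with hq
  have hq1 : -1 < q := by rw [hq]; linarith
  set f : ℝ → ℝ := fun u => (B u - B (2 * t - u)) * (t - u) ^ p with hf
  -- integrability of the power function
  have hpow : IntegrableOn (fun u : ℝ => (t - u) ^ q) (Ioo (t - δ) t) := by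
    have h1 : IntervalIntegrable (fun x : ℝ => x ^ q) volume 0 δ :=
      intervalIntegral.intervalIntegrable_rpow' hq1
    have h2 := (h1.comp_sub_left t).symm
    rw [sub_zero] at h2
    rw [intervalIntegrable_iff_integrableOn_Ioc_of_le (by linarith)] at h2
    exact h2.mono_set Ioo_subset_Ioc_self
  -- integrability of f
  have hmeasf : Measurable f := by
    exact (hB.measurable.sub
        (hB.comp (continuous_const.sub continuous_id)).measurable).mul
      ((measurable_const.sub measurable_id).pow_const p)
  have hint : IntegrableOn f (Ioo (t - δ) t) := by
    refine Integrable.mono' (hpow.const_mul (2 * C)) hmeasf.aestronglyMeasurable ?_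
    filter_upwards [ae_restrict_mem measurableSet_Ioo] with u hu
    obtain ⟨hu1, hu2⟩ := hu
    have htu : 0 < t - u := by linarith
    have hud : u ∈ Metric.ball t δ := by
      rw [Metric.mem_ball, Real.dist_eq, abs_sub_comm, abs_of_pos htu]; linarith
    have h2ud : (2 * t - u) ∈ Metric.ball t δ := by
      rw [Metric.mem_ball, Real.dist_eq, show 2 * t - u - t = t - u by ring,
        abs_of_pos htu]; linarith
    have hb1 := hHolder u hud
    have hb2 := hHolder (2 * t - u) h2ud
    rw [show |u - t| = t - u from by rw [abs_sub_comm]; exact abs_of_pos htu] at hb1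
    rw [show |2 * t - u - t| = t - u from by
      rw [show 2 * t - u - t = t - u by ring]; exact abs_of_pos htu] at hb2
    have hBd : |B u - B (2 * t - u)| ≤ 2 * C * (t - u) ^ θ := by
      calc |B u - B (2 * t - u)| ≤ |B u - B t| + |B t - B (2 * t - u)| := by
            have := abs_sub_le (B u) (B t) (B (2 * t - u)); linarith
        _ ≤ C * (t - u) ^ θ + C * (t - u) ^ θ := by
            rw [abs_sub_comm (B t) (B (2 * t - u))]; exact add_le_add hb1 hb2
        _ = 2 * C * (t - u) ^ θ := by ring
    have hpnn : (0:ℝ) ≤ (t - u) ^ p := Real.rpow_nonneg htu.le p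
    calc ‖f u‖ = |B u - B (2 * t - u)| * (t - u) ^ p := by
          rw [hf]; simp [Real.norm_eq_abs, abs_mul, abs_of_nonneg hpnn]
      _ ≤ 2 * C * (t - u) ^ θ * (t - u) ^ p :=
          mul_le_mul_of_nonneg_right hBd hpnn
      _ = 2 * C * (t - u) ^ q := by
          rw [hq, Real.rpow_add htu, mul_assoc]
  refine ⟨hint, ?_⟩
  -- key identity for 0 < ε < δ
  have key : ∀ ε ∈ Ioo (0:ℝ) δ,
      (∫ u in {u : ℝ | ε < |t - u| ∧ |t - u| < δ},
        B u * Real.sign (t - u) * |t - u| ^ p)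
        = ∫ u in (t - δ)..(t - ε), f u := by
    rintro ε ⟨hε0, hεδ⟩
    have hset : {u : ℝ | ε < |t - u| ∧ |t - u| < δ}
        = Ioo (t - δ) (t - ε) ∪ Ioo (t + ε) (t + δ) := by
      ext u
      simp only [mem_setOf_eq, mem_union, mem_Ioo, lt_abs, abs_lt]
      constructor
      · rintro ⟨h1 | h1, h2, h3⟩
        · left; constructor <;> linarith
        · right; constructor <;> linarith
      · rintro (⟨h1, h2⟩ | ⟨h1, h2⟩)
        · exact ⟨Or.inl (by linarith), by linarith, by linarith⟩
        · exact ⟨Or.inr (by linarith), by linarith, by linarith⟩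
    -- continuity of the two smooth pieces
    have hcpowL : ContinuousOn (fun u : ℝ => (t - u) ^ p) {u : ℝ | u < t} := by
      intro u hu
      have hne : t - u ≠ 0 := by simp only [mem_setOf_eq] at hu; intro h; linarith [sub_eq_zero.mp h]
      exact (((continuous_const.sub continuous_id').continuousAt).rpow_const
        (Or.inl hne)).continuousWithinAt
    have hcpowR : ContinuousOn (fun u : ℝ => (u - t) ^ p) {u : ℝ | t < u} := by
      intro u hu
      have hne : u - t ≠ 0 := by simp only [mem_setOf_eq] at hu; intro h; linarith [sub_eq_zero.mp h]
      exact (((continuous_id'.sub continuous_const).continuousAt).rpow_const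
        (Or.inl hne)).continuousWithinAt
    have hcl : ContinuousOn (fun u : ℝ => B u * (t - u) ^ p) (Icc (t - δ) (t - ε)) :=
      hB.continuousOn.mul (hcpowL.mono (fun u hu => by
        simp only [mem_setOf_eq]; exact lt_of_le_of_lt hu.2 (by linarith)))
    have hcr : ContinuousOn (fun u : ℝ => B u * (u - t) ^ p) (Icc (t + ε) (t + δ)) :=
      hB.continuousOn.mul (hcpowR.mono (fun u hu => by
        simp only [mem_setOf_eq]; exact lt_of_lt_of_le (by linarith) hu.1))
    have hcl2 : ContinuousOn (fun u : ℝ => B (2 * t - u) * (t - u) ^ p)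
        (Icc (t - δ) (t - ε)) :=
      (hB.comp (continuous_const.sub continuous_id)).continuousOn.mul
        (hcpowL.mono (fun u hu => by
          simp only [mem_setOf_eq]; exact lt_of_le_of_lt hu.2 (by linarith)))
    -- equalities of integrands on the pieces
    have heqL : EqOn (fun u : ℝ => B u * (t - u) ^ p)
        (fun u : ℝ => B u * Real.sign (t - u) * |t - u| ^ p) (Ioo (t - δ) (t - ε)) := by
      intro u hu
      have h1 : 0 < t - u := by have := hu.2; simp only [mem_Ioo] at hu; linarith [hu.2]
      simp only [Real.sign_of_pos h1, abs_of_pos h1, mul_one]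
    have heqR : EqOn (fun u : ℝ => -(B u * (u - t) ^ p))
        (fun u : ℝ => B u * Real.sign (t - u) * |t - u| ^ p) (Ioo (t + ε) (t + δ)) := by
      intro u hu
      have h1 : t - u < 0 := by simp only [mem_Ioo] at hu; linarith [hu.1]
      simp only [Real.sign_of_neg h1, abs_of_neg h1, neg_sub, mul_neg, mul_one, neg_mul]
    have hil : IntegrableOn (fun u : ℝ => B u * Real.sign (t - u) * |t - u| ^ p)
        (Ioo (t - δ) (t - ε)) :=
      ((hcl.integrableOn_Icc).mono_set Ioo_subset_Icc_self).congr_fun heqL measurableSet_Ioo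
    have hirneg : IntegrableOn (fun u : ℝ => -(B u * (u - t) ^ p)) (Ioo (t + ε) (t + δ)) :=
      ((hcr.integrableOn_Icc).mono_set Ioo_subset_Icc_self).neg
    have hir : IntegrableOn (fun u : ℝ => B u * Real.sign (t - u) * |t - u| ^ p)
        (Ioo (t + ε) (t + δ)) :=
      hirneg.congr_fun heqR measurableSet_Ioo
    have hdisj : Disjoint (Ioo (t - δ) (t - ε)) (Ioo (t + ε) (t + δ)) := by
      apply Set.disjoint_left.mpr
      rintro u ⟨_, h1⟩ ⟨h2, _⟩; linarith
    rw [hset, setIntegral_union hdisj measurableSet_Ioo hil hir]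
    have hL : (∫ u in Ioo (t - δ) (t - ε), B u * Real.sign (t - u) * |t - u| ^ p)
        = ∫ u in (t - δ)..(t - ε), B u * (t - u) ^ p := by
      rw [← setIntegral_congr_fun measurableSet_Ioo heqL,
        intervalIntegral.integral_of_le (by linarith), integral_Ioc_eq_integral_Ioo]
    have hR : (∫ u in Ioo (t + ε) (t + δ), B u * Real.sign (t - u) * |t - u| ^ p)
        = -∫ u in (t + ε)..(t + δ), B u * (u - t) ^ p := by
      rw [← setIntegral_congr_fun measurableSet_Ioo heqR,
        intervalIntegral.integral_of_le (by linarith), integral_Ioc_eq_integral_Ioo,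
        integral_neg]
    have hsub : (∫ u in (t + ε)..(t + δ), B u * (u - t) ^ p)
        = ∫ u in (t - δ)..(t - ε), B (2 * t - u) * (t - u) ^ p := by
      have h := intervalIntegral.integral_comp_sub_left (a := t - δ) (b := t - ε)
        (fun x => B x * (x - t) ^ p) (2 * t)
      rw [show 2 * t - (t - ε) = t + ε by ring, show 2 * t - (t - δ) = t + δ by ring] at h
      rw [← h]
      apply intervalIntegral.integral_congr
      intro u _
      simp only
      rw [show 2 * t - u - t = t - u by ring]
    have hiiL : IntervalIntegrable (fun u : ℝ => B u * (t - u) ^ p)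
        volume (t - δ) (t - ε) := by
      apply ContinuousOn.intervalIntegrable
      rwa [uIcc_of_le (by linarith)]
    have hiiL2 : IntervalIntegrable (fun u : ℝ => B (2 * t - u) * (t - u) ^ p)
        volume (t - δ) (t - ε) := by
      apply ContinuousOn.intervalIntegrable
      rwa [uIcc_of_le (by linarith)]
    rw [hL, hR, hsub, ← sub_eq_add_neg, ← intervalIntegral.integral_sub hiiL hiiL2]
    apply intervalIntegral.integral_congr
    intro u _
    simp only [hf]
    ring
  -- the limit
  have hIccInt : IntegrableOn f (Icc (t - δ) t) := by
    rw [integrableOn_Icc_iff_integrableOn_Ioo]; exact hint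
  have hcont : ContinuousOn (fun s => ∫ u in (t - δ)..s, f u) (Icc (t - δ) t) := by
    have h := intervalIntegral.continuousOn_primitive_interval
      (a := t - δ) (b := t) (f := f) (μ := volume)
      (by rwa [uIcc_of_le (by linarith)])
    rwa [uIcc_of_le (by linarith)] at h
  have hΦt : Tendsto (fun s => ∫ u in (t - δ)..s, f u) (𝓝[Icc (t - δ) t] t)
      (𝓝 (∫ u in (t - δ)..t, f u)) :=
    hcont t (right_mem_Icc.mpr (by linarith))
  have hmap : Tendsto (fun ε : ℝ => t - ε) (𝓝[>] (0:ℝ)) (𝓝[Icc (t - δ) t] t) := by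
    apply tendsto_nhdsWithin_of_tendsto_nhds_of_eventually_within
    · have : Tendsto (fun ε : ℝ => t - ε) (𝓝 0) (𝓝 (t - 0)) :=
        tendsto_const_nhds.sub tendsto_id
      rw [sub_zero] at this
      exact this.mono_left nhdsWithin_le_nhds
    · filter_upwards [Ioo_mem_nhdsGT_of_mem (show (0:ℝ) ∈ Ico 0 δ from ⟨le_refl 0, hδ⟩)]
        with ε hε
      exact ⟨by linarith [hε.2], by linarith [hε.1]⟩
  have hfinal : Tendsto (fun ε : ℝ => ∫ u in (t - δ)..(t - ε), f u) (𝓝[>] (0:ℝ))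
      (𝓝 (∫ u in (t - δ)..t, f u)) := hΦt.comp hmap
  have heqI : (∫ u in (t - δ)..t, f u) = ∫ u in Ioo (t - δ) t, f u := by
    rw [intervalIntegral.integral_of_le (by linarith), integral_Ioc_eq_integral_Ioo]
  rw [heqI] at hfinal
  apply hfinal.congr'
  filter_upwards [Ioo_mem_nhdsGT_of_mem (show (0:ℝ) ∈ Ico 0 δ from ⟨le_refl 0, hδ⟩)]
    with ε hε
  exact (key ε hε).symm
end
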